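/- arXiv:2306.15952 — 8 statements merged into one kernel-verified Lean document; each statement's English description precedes it below -/
import Mathlib

section
/- Let φ : M_{d1}(ℂ) → M_{d2}(ℂ) be a completely positive map with a minimal Choi–Kraus decomposition φ(X) = Σ_{j=1}^{k} L_j* X L_j (X ∈ M_{d1}(ℂ)), where L_1, …, L_k are d1 × d2 complex matrices forming a linearly independent set. Then φ is quasi-pure if and only if for every vector h₀ ∈ ℂ^{d2} with L_i h₀ ≠ 0 for some i ∈ {1, …, k}, the collection {L_1 h₀, L_2 h₀, …, L_k h₀} is linearly independent in ℂ^{d1}. -/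
noncomputable section

open scoped ComplexOrder

/-- A linear map between star algebras is *completely positive* if, at every matrix
level `n`, it maps positive matrices (those of the form `Nᴴ * N`) to positive matrices. -/
def IsCPMap {A B : Type*} [Ring A] [StarRing A] [Module ℂ A]
    [Ring B] [StarRing B] [Module ℂ B] (φ : A →ₗ[ℂ] B) : Prop :=
  ∀ (n : ℕ) (M : Matrix (Fin n) (Fin n) A),
    (∃ N : Matrix (Fin n) (Fin n) A, M = N.conjTranspose * N) →
    ∃ P : Matrix (Fin n) (Fin n) B, M.map φ = P.conjTranspose * P

/-- A bundled Hilbert space over `ℂ`. -/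
structure HilbertSpc : Type 1 where
  carrier : Type
  [ng : NormedAddCommGroup carrier]
  [ip : InnerProductSpace ℂ carrier]
  [cs : CompleteSpace carrier]

attribute [instance] HilbertSpc.ng HilbertSpc.ip HilbertSpc.cs

/-- A completely positive map `φ : A → B(H)` is *quasi-pure* if it has a minimal
Stinespring triple `(K, π, V)` (i.e. `φ(X) = V* π(X) V` and
`K = closed span {π(X)Vh}`) such that every non-zero vector in the range of `V`
is cyclic for the representation `π`. -/
def IsQuasiPure {A : Type*} [Ring A] [StarRing A] [Algebra ℂ A]
    {H : Type} [NormedAddCommGroup H] [InnerProductSpace ℂ H] [CompleteSpace H]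
    (φ : A →ₗ[ℂ] (H →L[ℂ] H)) : Prop :=
  ∃ (K : HilbertSpc) (π : A →⋆ₐ[ℂ] (K.carrier →L[ℂ] K.carrier)) (V : H →L[ℂ] K.carrier),
    (∀ X : A, φ X = (ContinuousLinearMap.adjoint V).comp ((π X).comp V)) ∧
    (Submodule.span ℂ {k : K.carrier | ∃ (X : A) (h : H), k = π X (V h)}).topologicalClosure = ⊤ ∧
    ∀ h : H, V h ≠ 0 →
      (Submodule.span ℂ {k : K.carrier | ∃ X : A, k = π X (V h)}).topologicalClosure = ⊤

/-- The star algebra isomorphism `M_d(ℂ) ≅ B(ℂ^d)`, as a linear map. -/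
noncomputable def matCLM (d : ℕ) :
    Matrix (Fin d) (Fin d) ℂ →ₗ[ℂ] (EuclideanSpace ℂ (Fin d) →L[ℂ] EuclideanSpace ℂ (Fin d)) where
  toFun M := Matrix.toEuclideanCLM (𝕜 := ℂ) M
  map_add' x y := by simp
  map_smul' c x := by simp

/-- Quasi-purity for a completely positive map between matrix algebras, via the
identification `M_{d₂}(ℂ) ≅ B(ℂ^{d₂})`. -/
noncomputable def IsQuasiPureMat {d₁ d₂ : ℕ}
    (φ : Matrix (Fin d₁) (Fin d₁) ℂ →ₗ[ℂ] Matrix (Fin d₂) (Fin d₂) ℂ) : Prop :=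
  IsQuasiPure ((matCLM d₂).comp φ)


namespace QPKraus


open Matrix ContinuousLinearMap
open scoped TensorProduct ComplexConjugate

local notation "⟪" x ", " y "⟫" => @inner ℂ _ _ x y

variable {d₁ d₂ k : ℕ}

def bd (k : ℕ) {d₁ : ℕ} (X : Matrix (Fin d₁) (Fin d₁) ℂ) :
    Matrix (Fin d₁ × Fin k) (Fin d₁ × Fin k) ℂ :=
  Matrix.of fun p q => if p.2 = q.2 then X p.1 q.1 else 0

lemma bd_apply (X : Matrix (Fin d₁) (Fin d₁) ℂ) (p q : Fin d₁ × Fin k) :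
    bd k X p q = if p.2 = q.2 then X p.1 q.1 else 0 := rfl

lemma bd_one : bd k (1 : Matrix (Fin d₁) (Fin d₁) ℂ) = 1 := by
  ext ⟨p, j⟩ ⟨q, j'⟩
  simp only [bd_apply, Matrix.one_apply, Prod.mk.injEq]
  by_cases h1 : j = j' <;> by_cases h2 : p = q <;> simp [h1, h2]

lemma bd_mul (X Y : Matrix (Fin d₁) (Fin d₁) ℂ) : bd k (X * Y) = bd k X * bd k Y := by
  ext ⟨p, j⟩ ⟨q, j'⟩
  simp only [bd_apply, Matrix.mul_apply, Fintype.sum_prod_type]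
  rw [Finset.sum_comm]
  simp only [ite_mul, mul_ite, zero_mul, mul_zero]
  by_cases h1 : j = j' <;> simp [h1]

lemma bd_zero : bd k (0 : Matrix (Fin d₁) (Fin d₁) ℂ) = 0 := by
  ext ⟨p, j⟩ ⟨q, j'⟩; simp [bd_apply]

lemma bd_add (X Y : Matrix (Fin d₁) (Fin d₁) ℂ) : bd k (X + Y) = bd k X + bd k Y := by
  ext ⟨p, j⟩ ⟨q, j'⟩
  by_cases h1 : j = j' <;> simp [bd_apply, h1]

lemma bd_smul (c : ℂ) (X : Matrix (Fin d₁) (Fin d₁) ℂ) : bd k (c • X) = c • bd k X := by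
  ext ⟨p, j⟩ ⟨q, j'⟩
  by_cases h1 : j = j' <;> simp [bd_apply, h1]

lemma bd_star (X : Matrix (Fin d₁) (Fin d₁) ℂ) : bd k (star X) = star (bd k X) := by
  ext ⟨p, j⟩ ⟨q, j'⟩
  simp only [Matrix.star_eq_conjTranspose, Matrix.conjTranspose_apply, bd_apply]
  by_cases h1 : j = j' <;> simp [h1, eq_comm]

def pi0 (d₁ k : ℕ) : Matrix (Fin d₁) (Fin d₁) ℂ →⋆ₐ[ℂ]
    (EuclideanSpace ℂ (Fin d₁ × Fin k) →L[ℂ] EuclideanSpace ℂ (Fin d₁ × Fin k)) where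
  toFun X := Matrix.toEuclideanCLM (𝕜 := ℂ) (bd k X)
  map_one' := by show Matrix.toEuclideanCLM (𝕜 := ℂ) (bd k 1) = 1; rw [bd_one]; exact map_one _
  map_mul' X Y := by show Matrix.toEuclideanCLM (𝕜 := ℂ) (bd k (X*Y)) = _ * _; rw [bd_mul]; exact map_mul _ _ _
  map_zero' := by show Matrix.toEuclideanCLM (𝕜 := ℂ) (bd k 0) = 0; rw [bd_zero]; exact map_zero _
  map_add' X Y := by show Matrix.toEuclideanCLM (𝕜 := ℂ) (bd k (X+Y)) = _ + _; rw [bd_add]; exact map_add _ _ _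
  commutes' c := by
    show Matrix.toEuclideanCLM (𝕜 := ℂ) (bd k (algebraMap ℂ _ c)) = _
    rw [Algebra.algebraMap_eq_smul_one, Algebra.algebraMap_eq_smul_one, bd_smul, bd_one,
      _root_.map_smul, _root_.map_one]
  map_star' X := by
    show Matrix.toEuclideanCLM (𝕜 := ℂ) (bd k (star X)) = star (Matrix.toEuclideanCLM (𝕜 := ℂ) (bd k X))
    rw [bd_star, map_star]

def Vm (L : Fin k → Matrix (Fin d₁) (Fin d₂) ℂ) : Matrix (Fin d₁ × Fin k) (Fin d₂) ℂ :=
  Matrix.of fun p q => L p.2 p.1 q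

def V0 (L : Fin k → Matrix (Fin d₁) (Fin d₂) ℂ) :
    EuclideanSpace ℂ (Fin d₂) →L[ℂ] EuclideanSpace ℂ (Fin d₁ × Fin k) :=
  LinearMap.toContinuousLinearMap (Matrix.toEuclideanLin (Vm L))

lemma V0_apply (L : Fin k → Matrix (Fin d₁) (Fin d₂) ℂ) (h : EuclideanSpace ℂ (Fin d₂))
    (p : Fin d₁ × Fin k) : V0 L h p = (L p.2 *ᵥ (h : Fin d₂ → ℂ)) p.1 := by
  show (Vm L *ᵥ (h : Fin d₂ → ℂ)) p = _
  simp [Vm, Matrix.mulVec, dotProduct]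

lemma pi0_apply (X : Matrix (Fin d₁) (Fin d₁) ℂ) (w : EuclideanSpace ℂ (Fin d₁ × Fin k))
    (p : Fin d₁ × Fin k) : pi0 d₁ k X w p = ∑ p', X p.1 p' * w (p', p.2) := by
  show (bd k X *ᵥ (w : Fin d₁ × Fin k → ℂ)) p = _
  simp only [Matrix.mulVec, dotProduct, bd_apply, Fintype.sum_prod_type, ite_mul, zero_mul]
  rw [Finset.sum_comm]
  simp


abbrev K0 (d₁ k : ℕ) : HilbertSpc := { carrier := EuclideanSpace ℂ (Fin d₁ × Fin k) }

section triple

variable (K : HilbertSpc)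
  (π : Matrix (Fin d₁) (Fin d₁) ℂ →⋆ₐ[ℂ] (K.carrier →L[ℂ] K.carrier))
  (V : EuclideanSpace ℂ (Fin d₂) →L[ℂ] K.carrier)
  (φ : Matrix (Fin d₁) (Fin d₁) ℂ →ₗ[ℂ] Matrix (Fin d₂) (Fin d₂) ℂ)

def TT : (Matrix (Fin d₁) (Fin d₁) ℂ) ⊗[ℂ] (EuclideanSpace ℂ (Fin d₂)) →ₗ[ℂ] K.carrier :=
  TensorProduct.lift (LinearMap.mk₂ ℂ (fun X h => π X (V h))
    (fun X Y h => show π (X + Y) (V h) = π X (V h) + π Y (V h) by rw [_root_.map_add]; rfl)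
    (fun c X h => show π (c • X) (V h) = c • π X (V h) by rw [_root_.map_smul]; rfl)
    (fun X h h' => show π X (V (h + h')) = π X (V h) + π X (V h') by
      rw [_root_.map_add, _root_.map_add])
    (fun c X h => show π X (V (c • h)) = c • π X (V h) by
      rw [_root_.map_smul, _root_.map_smul]))

lemma TT_tmul (X : Matrix (Fin d₁) (Fin d₁) ℂ) (h : EuclideanSpace ℂ (Fin d₂)) :
    TT K π V (X ⊗ₜ h) = π X (V h) := rfl

lemma inner_TT_tmul (hst : ∀ X, matCLM d₂ (φ X) = (adjoint V).comp ((π X).comp V))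
    (X Y : Matrix (Fin d₁) (Fin d₁) ℂ) (h h' : EuclideanSpace ℂ (Fin d₂)) :
    ⟪TT K π V (X ⊗ₜ h), TT K π V (Y ⊗ₜ h')⟫ = ⟪h, matCLM d₂ (φ (star X * Y)) h'⟫ := by
  rw [TT_tmul, TT_tmul, hst, ContinuousLinearMap.comp_apply, ContinuousLinearMap.comp_apply, adjoint_inner_right, _root_.map_mul, ContinuousLinearMap.mul_apply,
    map_star, star_eq_adjoint, adjoint_inner_right]

end triple

section two

variable (K K' : HilbertSpc)
  (π : Matrix (Fin d₁) (Fin d₁) ℂ →⋆ₐ[ℂ] (K.carrier →L[ℂ] K.carrier))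
  (π' : Matrix (Fin d₁) (Fin d₁) ℂ →⋆ₐ[ℂ] (K'.carrier →L[ℂ] K'.carrier))
  (V : EuclideanSpace ℂ (Fin d₂) →L[ℂ] K.carrier)
  (V' : EuclideanSpace ℂ (Fin d₂) →L[ℂ] K'.carrier)
  (φ : Matrix (Fin d₁) (Fin d₁) ℂ →ₗ[ℂ] Matrix (Fin d₂) (Fin d₂) ℂ)

lemma gram2 (hst : ∀ X, matCLM d₂ (φ X) = (adjoint V).comp ((π X).comp V))
    (hst' : ∀ X, matCLM d₂ (φ X) = (adjoint V').comp ((π' X).comp V'))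
    (t t' : (Matrix (Fin d₁) (Fin d₁) ℂ) ⊗[ℂ] (EuclideanSpace ℂ (Fin d₂))) :
    ⟪TT K π V t, TT K π V t'⟫ = ⟪TT K' π' V' t, TT K' π' V' t'⟫ := by
  induction t using TensorProduct.induction_on generalizing t' with
  | zero => simp
  | tmul X h =>
    induction t' using TensorProduct.induction_on with
    | zero => simp
    | tmul Y h' => rw [inner_TT_tmul K π V φ hst, inner_TT_tmul K' π' V' φ hst']
    | add a b ha hb => rw [map_add, map_add, inner_add_right, inner_add_right, ha, hb]
  | add a b ha hb =>
    rw [map_add, map_add, inner_add_left, inner_add_left, ha, hb]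

lemma TT_zero_iff (hst : ∀ X, matCLM d₂ (φ X) = (adjoint V).comp ((π X).comp V))
    (hst' : ∀ X, matCLM d₂ (φ X) = (adjoint V').comp ((π' X).comp V'))
    (t : (Matrix (Fin d₁) (Fin d₁) ℂ) ⊗[ℂ] (EuclideanSpace ℂ (Fin d₂))) :
    TT K π V t = 0 ↔ TT K' π' V' t = 0 := by
  rw [← inner_self_eq_zero (𝕜 := ℂ) (x := TT K π V t),
    gram2 K K' π π' V V' φ hst hst' t t, inner_self_eq_zero (𝕜 := ℂ)]

lemma span_set_eq_range :
    Submodule.span ℂ {w : K.carrier | ∃ X h, w = π X (V h)} = LinearMap.range (TT K π V) := by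
  apply le_antisymm
  · rw [Submodule.span_le]
    rintro w ⟨X, h, rfl⟩
    exact ⟨X ⊗ₜ h, rfl⟩
  · rintro w ⟨t, rfl⟩
    induction t using TensorProduct.induction_on with
    | zero => simp
    | tmul X h => exact Submodule.subset_span ⟨X, h, rfl⟩
    | add a b ha hb => rw [map_add]; exact add_mem ha hb

lemma span_seth_eq_range (h : EuclideanSpace ℂ (Fin d₂)) :
    Submodule.span ℂ {w : K.carrier | ∃ X, w = π X (V h)} =
      LinearMap.range ((TT K π V) ∘ₗ ((TensorProduct.mk ℂ _ _).flip h)) := by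
  apply le_antisymm
  · rw [Submodule.span_le]
    rintro w ⟨X, rfl⟩
    exact ⟨X, rfl⟩
  · rintro w ⟨X, rfl⟩
    exact Submodule.subset_span ⟨X, rfl⟩

end two

section canon

variable (L : Fin k → Matrix (Fin d₁) (Fin d₂) ℂ)
  (φ : Matrix (Fin d₁) (Fin d₁) ℂ →ₗ[ℂ] Matrix (Fin d₂) (Fin d₂) ℂ)

lemma toEuclideanLin_mul {m n p : Type*} [Fintype m] [Fintype n] [Fintype p]
    [DecidableEq n] [DecidableEq p]
    (A : Matrix m n ℂ) (B : Matrix n p ℂ) :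
    Matrix.toEuclideanLin (A * B) = (Matrix.toEuclideanLin A) ∘ₗ (Matrix.toEuclideanLin B) := by
  simp only [Matrix.toEuclideanLin_eq_toLin]
  exact Matrix.toLin_mul _ _ _ A B

lemma key_matrix (hdec : ∀ X, φ X = ∑ j, (L j).conjTranspose * X * L j)
    (X : Matrix (Fin d₁) (Fin d₁) ℂ) :
    (Vm L)ᴴ * (bd k X * Vm L) = φ X := by
  rw [hdec]
  ext q q'
  rw [Matrix.sum_apply]
  simp only [Matrix.mul_apply, Matrix.conjTranspose_apply, Vm, bd_apply, Matrix.of_apply,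
    Fintype.sum_prod_type, ite_mul, zero_mul, Finset.sum_ite_eq, Finset.mem_univ, if_true,
    Finset.sum_mul, Finset.mul_sum]
  rw [Finset.sum_comm]
  refine Finset.sum_congr rfl fun j _ => ?_
  rw [Finset.sum_comm]
  exact Finset.sum_congr rfl fun p' _ => Finset.sum_congr rfl fun p _ => by ring

lemma stine0 (hdec : ∀ X, φ X = ∑ j, (L j).conjTranspose * X * L j) (X : Matrix (Fin d₁) (Fin d₁) ℂ) :
    matCLM d₂ (φ X) = (adjoint (V0 L)).comp ((pi0 d₁ k X).comp (V0 L)) := by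
  have hadj : (adjoint (V0 L) : EuclideanSpace ℂ (Fin d₁ × Fin k) →ₗ[ℂ] EuclideanSpace ℂ (Fin d₂))
      = Matrix.toEuclideanLin (Vm L)ᴴ := by
    rw [Matrix.toEuclideanLin_conjTranspose_eq_adjoint, V0,
      ← LinearMap.adjoint_toContinuousLinearMap, LinearMap.coe_toContinuousLinearMap]
  apply ContinuousLinearMap.coe_injective
  rw [ContinuousLinearMap.toLinearMap_comp, ContinuousLinearMap.toLinearMap_comp, hadj]
  show Matrix.toEuclideanLin (φ X) = Matrix.toEuclideanLin (Vm L)ᴴ ∘ₗ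
    (Matrix.toEuclideanLin (bd k X) ∘ₗ Matrix.toEuclideanLin (Vm L))
  rw [← toEuclideanLin_mul, ← toEuclideanLin_mul, key_matrix L φ hdec X]

lemma inner_pi0_V0 (X : Matrix (Fin d₁) (Fin d₁) ℂ) (h : EuclideanSpace ℂ (Fin d₂))
    (g : EuclideanSpace ℂ (Fin d₁ × Fin k)) :
    ⟪pi0 d₁ k X (V0 L h), g⟫ =
      ∑ a, ∑ j, (starRingEnd ℂ) ((X *ᵥ (L j *ᵥ (h : Fin d₂ → ℂ))) a) * g (a, j) := by
  have hT : ∀ a j, pi0 d₁ k X (V0 L h) (a, j) = (X *ᵥ (L j *ᵥ (h : Fin d₂ → ℂ))) a := by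
    intro a j
    rw [pi0_apply]
    simp [V0_apply, Matrix.mulVec, dotProduct]
  simp only [PiLp.inner_apply, RCLike.inner_apply, Fintype.sum_prod_type]
  exact Finset.sum_congr rfl fun a _ => Finset.sum_congr rfl fun j _ => by rw [hT, mul_comm]

lemma orth_step (g : EuclideanSpace ℂ (Fin d₁ × Fin k)) (h : EuclideanSpace ℂ (Fin d₂))
    (hg : ∀ X, ⟪pi0 d₁ k X (V0 L h), g⟫ = 0) (a : Fin d₁) :
    ∑ j, (starRingEnd ℂ) (g (a, j)) • (L j *ᵥ (h : Fin d₂ → ℂ)) = 0 := by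
  funext b
  have hb := hg (Matrix.single a b 1)
  rw [inner_pi0_V0] at hb
  simp only [Matrix.single_mulVec, one_mul, Function.update_apply, Pi.zero_apply,
    apply_ite (starRingEnd ℂ), map_zero, ite_mul, zero_mul] at hb
  rw [Finset.sum_comm] at hb
  simp only [Finset.sum_ite_eq', Finset.mem_univ, if_true] at hb
  have hb2 := congrArg (starRingEnd ℂ) hb
  simp only [map_sum, map_zero, _root_.map_mul, Complex.conj_conj] at hb2
  simpa [Finset.sum_apply, mul_comm] using hb2

lemma min0 (hLindep : LinearIndependent ℂ L) (g : EuclideanSpace ℂ (Fin d₁ × Fin k))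
    (hg : ∀ (X) (h : EuclideanSpace ℂ (Fin d₂)), ⟪pi0 d₁ k X (V0 L h), g⟫ = 0) : g = 0 := by
  have hrow : ∀ a j, (starRingEnd ℂ) (g (a, j)) = 0 := by
    intro a j
    have hM : ∑ j', (starRingEnd ℂ) (g (a, j')) • L j' = 0 := by
      ext p q
      have h1 := congrFun (orth_step L g (EuclideanSpace.single q 1)
        (fun X => hg X _) a) p
      have hsingle : ∀ (M : Matrix (Fin d₁) (Fin d₂) ℂ) (p' : Fin d₁),
          (M *ᵥ ((EuclideanSpace.single q (1 : ℂ)) : Fin d₂ → ℂ)) p' = M p' q := by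
        intro M p'
        show (M *ᵥ Pi.single q 1) p' = M p' q
        simp [Matrix.mulVec_single]
      simp only [hsingle, Finset.sum_apply, Pi.smul_apply, smul_eq_mul, Pi.zero_apply] at h1
      simpa [Matrix.sum_apply] using h1
    exact Fintype.linearIndependent_iff.mp hLindep _ hM j
  ext pj
  have := congrArg (starRingEnd ℂ) (hrow pj.1 pj.2)
  simpa using this

lemma cyc0 (h : EuclideanSpace ℂ (Fin d₂))
    (hind : LinearIndependent ℂ (fun j => L j *ᵥ (h : Fin d₂ → ℂ)))
    (g : EuclideanSpace ℂ (Fin d₁ × Fin k))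
    (hg : ∀ X, ⟪pi0 d₁ k X (V0 L h), g⟫ = 0) : g = 0 := by
  have hrow : ∀ a j, (starRingEnd ℂ) (g (a, j)) = 0 := fun a j =>
    Fintype.linearIndependent_iff.mp hind _ (orth_step L g h hg a) j
  ext pj
  have := congrArg (starRingEnd ℂ) (hrow pj.1 pj.2)
  simpa using this

lemma range_T0 (hLindep : LinearIndependent ℂ L) :
    LinearMap.range (TT (K0 d₁ k) (pi0 d₁ k) (V0 L)) = ⊤ := by
  rw [← Submodule.orthogonal_eq_bot_iff, Submodule.eq_bot_iff]
  intro g hg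
  refine min0 L hLindep g fun X h => ?_
  exact (Submodule.mem_orthogonal _ g).mp hg _ ⟨X ⊗ₜ h, rfl⟩

lemma range_S0 (h : EuclideanSpace ℂ (Fin d₂))
    (hind : LinearIndependent ℂ (fun j => L j *ᵥ (h : Fin d₂ → ℂ))) :
    LinearMap.range ((TT (K0 d₁ k) (pi0 d₁ k) (V0 L)) ∘ₗ
      ((TensorProduct.mk ℂ _ _).flip h)) = ⊤ := by
  rw [← Submodule.orthogonal_eq_bot_iff, Submodule.eq_bot_iff]
  intro g hg
  refine cyc0 L h hind g fun X => ?_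
  exact (Submodule.mem_orthogonal _ g).mp hg _ ⟨X, rfl⟩

end canon

end QPKraus

open QPKraus
open Matrix
open scoped TensorProduct


/-- **Theorem.** Let `φ : M_{d₁}(ℂ) → M_{d₂}(ℂ)` be a completely positive map with minimal
Choi–Kraus decomposition `φ(X) = ∑ⱼ Lⱼ* X Lⱼ`, the `Lⱼ` being linearly independent. Then
`φ` is quasi-pure iff for every `h₀ ∈ ℂ^{d₂}` with `Lᵢ h₀ ≠ 0` for some `i`, the family
`{L₁ h₀, …, L_k h₀}` is linearly independent in `ℂ^{d₁}`. -/
theorem isQuasiPureMat_iff_kraus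
    {d₁ d₂ k : ℕ}
    (φ : Matrix (Fin d₁) (Fin d₁) ℂ →ₗ[ℂ] Matrix (Fin d₂) (Fin d₂) ℂ)
    (hφ : IsCPMap φ)
    (L : Fin k → Matrix (Fin d₁) (Fin d₂) ℂ)
    (hLindep : LinearIndependent ℂ L)
    (hdec : ∀ X, φ X = ∑ j, (L j).conjTranspose * X * L j) :
    IsQuasiPureMat φ ↔
      ∀ h₀ : Fin d₂ → ℂ, (∃ i, (L i).mulVec h₀ ≠ 0) →
        LinearIndependent ℂ (fun j => (L j).mulVec h₀) := by
  classical
  constructor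
  · rintro ⟨K, π, V, hst, hmin, hcyc⟩ h₀ ⟨i, hi⟩
    simp only [LinearMap.comp_apply] at hst
    rw [Fintype.linearIndependent_iff]
    intro c hc j
    by_contra hcj
    set h' : EuclideanSpace ℂ (Fin d₂) := (WithLp.equiv 2 (Fin d₂ → ℂ)).symm h₀ with hh'
    have hziff := TT_zero_iff K (K0 d₁ k) π (pi0 d₁ k) V (V0 L) φ hst (stine0 L φ hdec)
    obtain ⟨p₀, hp₀⟩ : ∃ p, (L i *ᵥ h₀) p ≠ 0 := by
      by_contra hall; push_neg at hall; exact hi (funext hall)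
    have hVh' : V h' ≠ 0 := by
      intro h0
      have hz : TT K π V ((1 : Matrix (Fin d₁) (Fin d₁) ℂ) ⊗ₜ h') = 0 := by
        rw [TT_tmul, _root_.map_one, ContinuousLinearMap.one_apply, h0]
      have hz0 := (hziff _).mp hz
      rw [TT_tmul, _root_.map_one, ContinuousLinearMap.one_apply] at hz0
      have hv : V0 L h' (p₀, i) = 0 := by rw [hz0]; rfl
      rw [V0_apply] at hv
      exact hp₀ hv
    have hr := hcyc h' hVh'
    rw [span_seth_eq_range K π V h'] at hr
    have hclosed : IsClosed ((LinearMap.range ((TT K π V) ∘ₗ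
        ((TensorProduct.mk ℂ (Matrix (Fin d₁) (Fin d₁) ℂ)
          (EuclideanSpace ℂ (Fin d₂))).flip h'))) : Set K.carrier) :=
      Submodule.closed_of_finiteDimensional _
    rw [hclosed.submodule_topologicalClosure_eq] at hr
    set u : EuclideanSpace ℂ (Fin d₁ × Fin k) :=
      (WithLp.equiv 2 (Fin d₁ × Fin k → ℂ)).symm
        (fun pj => if pj.1 = p₀ then (starRingEnd ℂ) (c pj.2) else 0) with hu
    have hu_ne : u ≠ 0 := by
      intro h0
      have h1 : u (p₀, j) = 0 := by rw [h0]; rfl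
      have h1' : (if p₀ = p₀ then (starRingEnd ℂ) (c j) else 0) = 0 := h1
      simp at h1'
      exact hcj h1'
    have hu_orth : ∀ X, (inner ℂ (pi0 d₁ k X (V0 L h')) u : ℂ) = 0 := by
      intro X
      rw [inner_pi0_V0]
      have hu_app : ∀ (a : Fin d₁) (j' : Fin k),
          u (a, j') = if a = p₀ then (starRingEnd ℂ) (c j') else 0 := fun _ _ => rfl
      simp only [hu_app, mul_ite, mul_zero]
      rw [Finset.sum_comm]
      simp only [Finset.sum_ite_eq', Finset.mem_univ, if_true]
      have hkey : ∑ j', c j' * (X *ᵥ (L j' *ᵥ h₀)) p₀ = 0 := by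
        have h2 : (X.mulVecLin) (∑ j', c j' • (L j' *ᵥ h₀)) = 0 := by rw [hc]; simp
        have h3 : ∑ j', c j' • (X *ᵥ (L j' *ᵥ h₀)) = 0 := by
          simpa [map_sum, Matrix.mulVecLin_apply] using h2
        simpa [Finset.sum_apply, Pi.smul_apply, smul_eq_mul] using congrFun h3 p₀
      calc ∑ j', (starRingEnd ℂ) ((X *ᵥ (L j' *ᵥ (h' : Fin d₂ → ℂ))) p₀) * (starRingEnd ℂ) (c j')
          = (starRingEnd ℂ) (∑ j', c j' * (X *ᵥ (L j' *ᵥ h₀)) p₀) := by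
            rw [map_sum]; exact Finset.sum_congr rfl fun j' _ => by rw [_root_.map_mul, mul_comm]; rfl
        _ = 0 := by rw [hkey]; simp
    have hrange0 := range_T0 L hLindep
    have hsurj0 : ∀ v : EuclideanSpace ℂ (Fin d₁ × Fin k), ∃ X, pi0 d₁ k X (V0 L h') = v := by
      intro v
      have hv : v ∈ LinearMap.range (TT (K0 d₁ k) (pi0 d₁ k) (V0 L)) := by
        rw [hrange0]; trivial
      obtain ⟨t, ht⟩ := hv
      have hw : TT K π V t ∈ LinearMap.range ((TT K π V) ∘ₗ
          ((TensorProduct.mk ℂ (Matrix (Fin d₁) (Fin d₁) ℂ)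
            (EuclideanSpace ℂ (Fin d₂))).flip h')) := by
        rw [hr]; trivial
      obtain ⟨X, hX⟩ := hw
      refine ⟨X, ?_⟩
      have hz : TT K π V (t - X ⊗ₜ h') = 0 := by
        rw [map_sub, sub_eq_zero]; exact hX.symm
      have hz0 := (hziff _).mp hz
      rw [map_sub, sub_eq_zero] at hz0
      exact (hz0.symm.trans ht)
    obtain ⟨X, hXu⟩ := hsurj0 u
    have hzero : (inner ℂ u u : ℂ) = 0 := by nth_rewrite 1 [← hXu]; exact hu_orth X
    exact hu_ne (inner_self_eq_zero.mp hzero)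
  · intro hind
    refine ⟨K0 d₁ k, pi0 d₁ k, V0 L, fun X => stine0 L φ hdec X, ?_, ?_⟩
    · rw [span_set_eq_range (K0 d₁ k) (pi0 d₁ k) (V0 L), range_T0 L hLindep]
      exact le_antisymm le_top (Submodule.le_topologicalClosure ⊤)
    · intro h hVh
      have hex : ∃ i, L i *ᵥ (h : Fin d₂ → ℂ) ≠ 0 := by
        by_contra hall; push_neg at hall
        apply hVh
        ext pj
        rw [V0_apply, hall pj.2]
        rfl
      have hind' : LinearIndependent ℂ (fun j => L j *ᵥ (h : Fin d₂ → ℂ)) := hind _ hex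
      rw [span_seth_eq_range (K0 d₁ k) (pi0 d₁ k) (V0 L) h, range_S0 L h hind']
      exact le_antisymm le_top (Submodule.le_topologicalClosure ⊤)
end
end

section
/- Let φ : M_{d1}(ℂ) → M_{d2}(ℂ) be a quasi-pure completely positive map. Then the Choi rank of φ is at most d1. -/
noncomputable section

open scoped ComplexOrder

/-- The Choi rank of a map `φ : M_{d₁}(ℂ) → M_{d₂}(ℂ)`: the minimal number `k` of Kraus
operators needed to write `φ(X) = ∑_{j=1}^k Lⱼ* X Lⱼ`. -/
noncomputable def ChoiRank {d₁ d₂ : ℕ}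
    (φ : Matrix (Fin d₁) (Fin d₁) ℂ →ₗ[ℂ] Matrix (Fin d₂) (Fin d₂) ℂ) : ℕ :=
  sInf {k : ℕ | ∃ L : Fin k → Matrix (Fin d₁) (Fin d₂) ℂ,
    ∀ X, φ X = ∑ j, (L j).conjTranspose * X * L j}

open scoped InnerProductSpace

/-- Auxiliary: matrix entries from the Euclidean CLM. -/
lemma matCLM_entry {d : ℕ} (M : Matrix (Fin d) (Fin d) ℂ) (p q : Fin d) :
    ⟪EuclideanSpace.single p (1:ℂ), matCLM d M (EuclideanSpace.single q 1)⟫_ℂ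
      = M p q := by
  show ⟪EuclideanSpace.single p (1:ℂ),
      Matrix.toEuclideanCLM (𝕜 := ℂ) M (EuclideanSpace.single q 1)⟫_ℂ = M p q
  rw [EuclideanSpace.inner_single_left, map_one, one_mul]
  have h : (Matrix.toEuclideanCLM (n := Fin d) (𝕜 := ℂ) M (EuclideanSpace.single q 1)) p
      = (M.mulVec (WithLp.equiv 2 _ (EuclideanSpace.single q (1:ℂ)))) p := by
    have h0 := congrFun (Matrix.ofLp_toEuclideanCLM (n := Fin d) (𝕜 := ℂ) M
      (EuclideanSpace.single q 1)) p
    simpa only [Matrix.toLin'_apply, WithLp.equiv_apply] using h0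
  rw [h, WithLp.equiv_apply, PiLp.ofLp_single, Matrix.mulVec_single_one, Matrix.col_apply]

/-- Auxiliary: sandwiching a matrix between matrix units. -/
lemma stdBasis_sandwich {d : ℕ} (X : Matrix (Fin d) (Fin d) ℂ) (i a b l : Fin d) :
    Matrix.single i a 1 * (X * Matrix.single b l 1)
      = X a b • Matrix.single i l 1 := by
  ext p q
  by_cases hp : p = i
  · subst hp
    rw [Matrix.single_mul_apply_same, one_mul]
    by_cases hq : q = l
    · subst hq
      rw [Matrix.mul_single_apply_same]
      simp
    · rw [Matrix.mul_single_apply_of_ne 1 b l a q hq, Matrix.smul_apply,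
        Matrix.single_apply_of_col_ne p p (fun h => hq h.symm) 1, smul_zero]
  · rw [Matrix.single_mul_apply_of_ne 1 i a p q hp, Matrix.smul_apply,
      Matrix.single_apply_of_row_ne (fun h => hp h.symm) l q 1, smul_zero]

/-- **Corollary.** The Choi rank of a quasi-pure completely positive map
`φ : M_{d₁}(ℂ) → M_{d₂}(ℂ)` is at most `d₁`. -/
theorem choiRank_le_of_isQuasiPureMat
    {d₁ d₂ : ℕ}
    (φ : Matrix (Fin d₁) (Fin d₁) ℂ →ₗ[ℂ] Matrix (Fin d₂) (Fin d₂) ℂ)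
    (hφ : IsCPMap φ) (hqp : IsQuasiPureMat φ) :
    ChoiRank φ ≤ d₁ := by
  classical
  obtain ⟨K, π, V, hdil, -, hcyc⟩ := hqp
  have hdil' : ∀ X, matCLM d₂ (φ X)
      = (ContinuousLinearMap.adjoint V).comp ((π X).comp V) := fun X => hdil X
  -- it suffices to exhibit `k ≤ d₁` Kraus operators
  have key : ∀ (k : ℕ), k ≤ d₁ →
      (∃ L : Fin k → Matrix (Fin d₁) (Fin d₂) ℂ,
        ∀ X, φ X = ∑ j, (L j).conjTranspose * X * L j) → ChoiRank φ ≤ d₁ := by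
    intro k hk hL
    exact le_trans (Nat.sInf_le hL) hk
  -- injectivity of matCLM
  have hinj : ∀ M : Matrix (Fin d₂) (Fin d₂) ℂ, matCLM d₂ M = 0 → M = 0 := by
    intro M hM
    have : Matrix.toEuclideanCLM (𝕜 := ℂ) M = Matrix.toEuclideanCLM (𝕜 := ℂ) 0 := by
      rw [map_zero]; exact hM
    exact Matrix.toEuclideanCLM.injective this
  by_cases hV : ∀ h, V h = 0
  · refine key d₁ le_rfl ⟨fun _ => 0, fun X => ?_⟩
    have hz : matCLM d₂ (φ X) = 0 := by
      rw [hdil' X]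
      ext h
      simp [hV h]
    rw [hinj _ hz]
    simp
  push_neg at hV
  obtain ⟨h₀, hk₀⟩ := hV
  set k₀ := V h₀ with hk₀def
  have hcyc' := hcyc h₀ hk₀
  -- the "evaluation at k₀" linear map
  set T : Matrix (Fin d₁) (Fin d₁) ℂ →ₗ[ℂ] K.carrier :=
    { toFun := fun X => π X k₀
      map_add' := fun X Y => by
        show π (X + Y) k₀ = π X k₀ + π Y k₀
        rw [map_add]; rfl
      map_smul' := fun c X => by
        show π (c • X) k₀ = c • π X k₀
        rw [map_smul]; rfl } with hT
  have hsetT : {k : K.carrier | ∃ X, k = π X k₀} = Set.range T := by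
    ext x
    constructor
    · rintro ⟨X, rfl⟩; exact ⟨X, rfl⟩
    · rintro ⟨X, rfl⟩; exact ⟨X, rfl⟩
  have hspanT : Submodule.span ℂ {k : K.carrier | ∃ X, k = π X k₀} = LinearMap.range T := by
    rw [hsetT, ← LinearMap.coe_range, Submodule.span_eq]
  have hrange_top : LinearMap.range T = ⊤ := by
    have hclosed : IsClosed ((LinearMap.range T : Submodule ℂ K.carrier) : Set K.carrier) :=
      Submodule.closed_of_finiteDimensional _
    rw [← hclosed.submodule_topologicalClosure_eq, ← hspanT]
    exact hcyc'
  have hTsurj : Function.Surjective T := LinearMap.range_eq_top.mp hrange_top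
  haveI : FiniteDimensional ℂ K.carrier := Module.Finite.of_surjective T hTsurj
  -- d₁ ≠ 0
  have hd : d₁ ≠ 0 := by
    rintro rfl
    apply hk₀
    have h1 : (1 : Matrix (Fin 0) (Fin 0) ℂ) = 0 := Subsingleton.elim _ _
    have h2 : (1 : K.carrier →L[ℂ] K.carrier) = 0 := by
      rw [← map_one π, h1, map_zero]
    calc V h₀ = (1 : K.carrier →L[ℂ] K.carrier) (V h₀) := rfl
      _ = (0 : K.carrier →L[ℂ] K.carrier) (V h₀) := by rw [h2]
      _ = 0 := rfl
  set i0 : Fin d₁ := ⟨0, Nat.pos_of_ne_zero hd⟩ with hi0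
  set E : Fin d₁ → Fin d₁ → Matrix (Fin d₁) (Fin d₁) ℂ :=
    fun i j => Matrix.single i j 1 with hE
  have hπmul : ∀ (A B : Matrix (Fin d₁) (Fin d₁) ℂ) (x : K.carrier),
      π A (π B x) = π (A * B) x := fun A B x => by rw [map_mul]; rfl
  have hπadj : ∀ (B : Matrix (Fin d₁) (Fin d₁) ℂ) (x y : K.carrier),
      ⟪π B x, y⟫_ℂ = ⟪x, π (star B) y⟫_ℂ := fun B x y => by
    rw [map_star, ContinuousLinearMap.star_eq_adjoint]
    exact (ContinuousLinearMap.adjoint_inner_right _ _ _).symm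
  have hEstar : ∀ i j, star (E i j) = E j i := by
    intro i j
    ext a b
    simp only [hE, Matrix.star_apply, Matrix.single, Matrix.of_apply]
    by_cases h1 : j = a <;> by_cases h2 : i = b <;> simp [h1, h2]
  have hEmulE : ∀ i j a b, E i j * E a b = if j = a then E i b else 0 := by
    intro i j a b
    simp only [hE]
    by_cases h : j = a
    · subst h
      simp
    · simp [h]
  -- the spanning vectors of the multiplicity space
  set w : Fin d₁ → K.carrier := fun j => π (E i0 j) k₀ with hw
  set W : Submodule ℂ K.carrier := Submodule.span ℂ (Set.range w) with hWdef
  have hWmem : ∀ j, w j ∈ W := fun j => Submodule.subset_span ⟨j, rfl⟩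
  have hW1 : ∀ x ∈ W, π (E i0 i0) x = x := by
    intro x hx
    induction hx using Submodule.span_induction with
    | mem x hx =>
      obtain ⟨j, rfl⟩ := hx
      rw [hw]
      show π (E i0 i0) (π (E i0 j) k₀) = π (E i0 j) k₀
      rw [hπmul, hEmulE, if_pos rfl]
    | zero => simp
    | add x y _ _ hx hy => rw [map_add, hx, hy]
    | smul c x _ hx => rw [map_smul]; show c • π (E i0 i0) x = c • x; rw [hx]
  set m := Module.finrank ℂ W with hm
  have hmle : m ≤ d₁ := by
    have := finrank_range_le_card (R := ℂ) w
    rw [Fintype.card_fin] at this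
    exact this
  set f : OrthonormalBasis (Fin m) ℂ W := stdOrthonormalBasis ℂ W with hf
  set g : Fin d₁ × Fin m → K.carrier := fun p => π (E p.1 i0) ((f p.2 : W) : K.carrier) with hg
  -- orthonormality of g
  have hg_inner : ∀ u v : Fin d₁ × Fin m, ⟪g u, g v⟫_ℂ = if u = v then 1 else 0 := by
    rintro ⟨a, j⟩ ⟨b, l⟩
    rw [hg]
    show ⟪π (E a i0) (f j : K.carrier), π (E b i0) (f l : K.carrier)⟫_ℂ = _
    rw [hπadj, hπmul, hEstar, hEmulE]
    by_cases hab : a = b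
    · subst hab
      rw [if_pos rfl, hW1 _ (f l).2]
      have : ⟪((f j : W) : K.carrier), ((f l : W) : K.carrier)⟫_ℂ = ⟪f j, f l⟫_ℂ := rfl
      rw [this, orthonormal_iff_ite.mp f.orthonormal j l]
      by_cases hjl : j = l
      · subst hjl; simp
      · simp [hjl, Prod.ext_iff]
    · rw [if_neg hab, map_zero]
      simp [Prod.ext_iff, hab]
  have hortho : Orthonormal ℂ g := orthonormal_iff_ite.mpr hg_inner
  -- g spans K
  have hg_span : ⊤ ≤ Submodule.span ℂ (Set.range g) := by
    intro x _
    obtain ⟨X, rfl⟩ := hTsurj x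
    show π X k₀ ∈ Submodule.span ℂ (Set.range g)
    rw [Matrix.matrix_eq_sum_single X, map_sum]
    rw [ContinuousLinearMap.sum_apply]
    refine Submodule.sum_mem _ fun a _ => ?_
    rw [map_sum, ContinuousLinearMap.sum_apply]
    refine Submodule.sum_mem _ fun b _ => ?_
    have hsm : Matrix.single a b (X a b) = X a b • E a b := by
      ext p q
      simp only [hE, Matrix.single, Matrix.smul_apply, Matrix.of_apply, smul_eq_mul]
      split <;> simp
    rw [hsm, map_smul]
    refine Submodule.smul_mem _ _ ?_
    show π (E a b) k₀ ∈ _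
    have hEab : π (E a b) k₀ = π (E a i0) (w b) := by
      rw [hw]
      show π (E a b) k₀ = π (E a i0) (π (E i0 b) k₀)
      rw [hπmul, hEmulE, if_pos rfl]
    rw [hEab]
    -- expand w b in the basis f
    have hwb : w b = ∑ l, f.repr ⟨w b, hWmem b⟩ l • ((f l : W) : K.carrier) := by
      have h2 := congrArg (Subtype.val) (f.sum_repr ⟨w b, hWmem b⟩)
      simp only [AddSubmonoidClass.coe_finset_sum, SetLike.val_smul] at h2
      exact h2.symm
    rw [hwb, map_sum]
    refine Submodule.sum_mem _ fun l _ => ?_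
    rw [map_smul]
    exact Submodule.smul_mem _ _ (Submodule.subset_span ⟨(a, l), rfl⟩)
  set B : OrthonormalBasis (Fin d₁ × Fin m) ℂ K.carrier := OrthonormalBasis.mk hortho hg_span
    with hB
  have hBg : ∀ u, B u = g u := fun u => by rw [hB, OrthonormalBasis.coe_mk]
  -- key inner product computation
  have hkey : ∀ (X : Matrix (Fin d₁) (Fin d₁) ℂ) (a b : Fin d₁) (j l : Fin m),
      ⟪g (a, j), π X (g (b, l))⟫_ℂ = if j = l then X a b else 0 := by
    intro X a b j l
    rw [hg]
    show ⟪π (E a i0) (f j : K.carrier), π X (π (E b i0) (f l : K.carrier))⟫_ℂ = _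
    rw [hπmul, hπadj, hπmul, hEstar]
    have hsand : E i0 a * (X * E b i0) = X a b • E i0 i0 := stdBasis_sandwich X i0 a b i0
    rw [← mul_assoc, mul_assoc, hsand, map_smul]
    show ⟪((f j : W) : K.carrier), X a b • π (E i0 i0) ((f l : W) : K.carrier)⟫_ℂ = _
    rw [hW1 _ (f l).2, inner_smul_right]
    have : ⟪((f j : W) : K.carrier), ((f l : W) : K.carrier)⟫_ℂ = ⟪f j, f l⟫_ℂ := rfl
    rw [this, orthonormal_iff_ite.mp f.orthonormal j l]
    by_cases hjl : j = l <;> simp [hjl]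
  -- the Kraus operators
  set L : Fin m → Matrix (Fin d₁) (Fin d₂) ℂ :=
    fun l => Matrix.of fun i q => ⟪g (i, l), V (EuclideanSpace.single q 1)⟫_ℂ with hLdef
  refine key m hmle ⟨L, fun X => ?_⟩
  ext p q
  -- left side as an inner product
  have hL1 : φ X p q = ⟪V (EuclideanSpace.single p 1), π X (V (EuclideanSpace.single q 1))⟫_ℂ := by
    rw [← matCLM_entry (φ X) p q, hdil' X]
    show ⟪EuclideanSpace.single p (1:ℂ), ContinuousLinearMap.adjoint V
      (π X (V (EuclideanSpace.single q 1)))⟫_ℂ = _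
    rw [ContinuousLinearMap.adjoint_inner_right]
  rw [hL1]
  -- expand both vectors in the basis B
  have hrep : ∀ y : K.carrier, y = ∑ u : Fin d₁ × Fin m, ⟪g u, y⟫_ℂ • g u := by
    intro y
    conv_lhs => rw [← B.sum_repr' y]
    refine Finset.sum_congr rfl fun u _ => ?_
    rw [hBg]
  rw [hrep (V (EuclideanSpace.single p 1)), hrep (V (EuclideanSpace.single q 1))]
  have hkey' : ∀ (u v : Fin d₁ × Fin m),
      ⟪g u, π X (g v)⟫_ℂ = if u.2 = v.2 then X u.1 v.1 else 0 := fun u v =>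
    hkey X u.1 v.1 u.2 v.2
  rw [map_sum, sum_inner]
  simp only [map_smul, inner_sum, inner_smul_left, inner_smul_right, hkey', mul_ite, mul_zero,
    Fintype.sum_prod_type, Finset.sum_ite_eq, Finset.mem_univ, if_true]
  simp only [Matrix.sum_apply, Matrix.mul_apply, Matrix.conjTranspose_apply, hLdef,
    Matrix.of_apply, Finset.sum_mul]
  rw [Finset.sum_comm]
  refine Finset.sum_congr rfl fun j _ => ?_
  rw [Finset.sum_comm]
  refine Finset.sum_congr rfl fun b _ => Finset.sum_congr rfl fun a _ => ?_
  rw [Complex.star_def]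
  ring
end
end

section
/- Let φ : M_{d1}(ℂ) → M_{d2}(ℂ) be a quasi-pure completely positive map with minimal Choi–Kraus decomposition φ(X) = Σ_{j=1}^{k} L_j* X L_j, where L_1, …, L_k are linearly independent d1 × d2 matrices. Then ker(L_i) = ker(L_j) for all 1 ≤ i, j ≤ k. -/
noncomputable section

open scoped ComplexOrder

open Matrix ComplexConjugate

namespace KerKrausAux

variable {d₁ d₂ k : ℕ} (L : Fin k → Matrix (Fin d₁) (Fin d₂) ℂ)

noncomputable def myB : Matrix (Fin d₁) (Fin d₁) ℂ →ₗ[ℂ] EuclideanSpace ℂ (Fin d₂) →ₗ[ℂ]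
    EuclideanSpace ℂ (Fin k × Fin d₁) :=
  LinearMap.mk₂ ℂ
    (fun X h => (WithLp.toLp 2 (fun p : Fin k × Fin d₁ => ((X * L p.1) *ᵥ h) p.2) : EuclideanSpace ℂ (Fin k × Fin d₁)))
    (fun X Y h => PiLp.ext fun p => by
      simp [Matrix.add_mul, Matrix.add_mulVec, PiLp.add_apply])
    (fun c X h => PiLp.ext fun p => by
      simp [Matrix.smul_mul, Matrix.smul_mulVec, PiLp.smul_apply, smul_eq_mul])
    (fun X h g => PiLp.ext fun p => by
      simp [Matrix.mulVec, dotProduct, PiLp.add_apply, mul_add, Finset.sum_add_distrib])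
    (fun c X h => PiLp.ext fun p => by
      simp [Matrix.mulVec, dotProduct, PiLp.smul_apply, smul_eq_mul, Finset.mul_sum,
        mul_left_comm])

theorem myB_apply (X : Matrix (Fin d₁) (Fin d₁) ℂ) (h : EuclideanSpace ℂ (Fin d₂))
    (p : Fin k × Fin d₁) : myB L X h p = ((X * L p.1) *ᵥ h) p.2 := rfl

theorem sum_mulVec' (M : Fin k → Matrix (Fin d₂) (Fin d₂) ℂ) (g : Fin d₂ → ℂ) :
    (∑ j, M j) *ᵥ g = ∑ j, (M j) *ᵥ g := by
  funext a
  simp [Matrix.mulVec, dotProduct, Matrix.sum_apply, Finset.sum_mul]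
  rw [Finset.sum_comm]

theorem inner_myB (X Y : Matrix (Fin d₁) (Fin d₁) ℂ) (h g : EuclideanSpace ℂ (Fin d₂)) :
    (inner ℂ (myB L X h) (myB L Y g) : ℂ) =
      inner ℂ h (Matrix.toEuclideanCLM (𝕜 := ℂ) (∑ j, (L j)ᴴ * (Xᴴ * Y) * L j) g) := by
  have key : ∀ j : Fin k, star ((X * L j) *ᵥ (h : Fin d₂ → ℂ)) ⬝ᵥ ((Y * L j) *ᵥ (g : Fin d₂ → ℂ))
      = star (h : Fin d₂ → ℂ) ⬝ᵥ (((L j)ᴴ * (Xᴴ * Y) * L j) *ᵥ (g : Fin d₂ → ℂ)) := fun j => by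
    simp [Matrix.star_mulVec, dotProduct_mulVec, Matrix.vecMul_vecMul,
      Matrix.conjTranspose_mul, Matrix.mul_assoc]
  have hR : (inner ℂ h (Matrix.toEuclideanCLM (𝕜 := ℂ) (∑ j, (L j)ᴴ * (Xᴴ * Y) * L j) g) : ℂ)
      = ∑ j, star (h : Fin d₂ → ℂ) ⬝ᵥ (((L j)ᴴ * (Xᴴ * Y) * L j) *ᵥ (g : Fin d₂ → ℂ)) := by
    have hA : ∀ a, (Matrix.toEuclideanCLM (𝕜 := ℂ) (∑ j, (L j)ᴴ * (Xᴴ * Y) * L j) g) a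
        = ((∑ j, (L j)ᴴ * (Xᴴ * Y) * L j) *ᵥ (g : Fin d₂ → ℂ)) a := fun a => rfl
    simp only [PiLp.inner_apply, RCLike.inner_apply', hA, sum_mulVec']
    simp only [dotProduct, Pi.star_apply, RCLike.star_def, Finset.sum_apply,
      Finset.mul_sum]
    rw [Finset.sum_comm]
  rw [hR]
  simp only [PiLp.inner_apply, RCLike.inner_apply', myB_apply]
  rw [Fintype.sum_prod_type]
  exact Finset.sum_congr rfl fun j _ => by
    rw [← key j]; simp [dotProduct, Pi.star_apply, RCLike.star_def]

theorem spanTop (hLindep : LinearIndependent ℂ L) :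
    Submodule.span ℂ {v : EuclideanSpace ℂ (Fin k × Fin d₁) | ∃ X h', v = myB L X h'} = ⊤ := by
  rw [← Submodule.orthogonal_eq_bot_iff]
  rw [Submodule.eq_bot_iff]
  intro u hu
  have hu' : ∀ (X : Matrix (Fin d₁) (Fin d₁) ℂ) (h' : EuclideanSpace ℂ (Fin d₂)),
      (inner ℂ (myB L X h') u : ℂ) = 0 := fun X h' =>
    (Submodule.mem_orthogonal _ u).mp hu _ (Submodule.subset_span ⟨X, h', rfl⟩)
  have hzero : ∀ (a : Fin d₁) (b : Fin d₁) (c : Fin d₂),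
      ∑ j, conj (L j b c) * u (j, a) = 0 := by
    intro a b c
    have := hu' (Matrix.single a b (1:ℂ)) (EuclideanSpace.single c 1)
    simp only [PiLp.inner_apply, RCLike.inner_apply', myB_apply] at this
    rw [Fintype.sum_prod_type] at this
    convert this using 1
    refine (Finset.sum_congr rfl fun j _ => ?_).symm
    have hv : ∀ a' : Fin d₁,
        ((Matrix.single a b (1:ℂ) * L j) *ᵥ (EuclideanSpace.single c 1 : Fin d₂ → ℂ)) a'
          = if a' = a then L j b c else 0 := by
      intro a'
      simp [Matrix.mulVec, dotProduct, Matrix.mul_apply, Matrix.single,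
        EuclideanSpace.single_apply, ite_and, Finset.sum_ite_eq, Finset.sum_ite_eq', eq_comm]
    simp only [hv]
    simp [apply_ite (conj)]
  have hcoef : ∀ a : Fin d₁, ∀ j, conj (u (j, a)) = 0 := by
    intro a
    refine Fintype.linearIndependent_iff.mp hLindep (fun j => conj (u (j, a))) ?_
    ext b c
    have := congrArg conj (hzero a b c)
    simpa [Finset.sum_apply, Matrix.sum_apply, mul_comm] using this
  refine PiLp.ext fun p => ?_
  have := hcoef p.2 p.1
  simpa using congrArg conj this

end KerKrausAux

open KerKrausAux in
/-- **Corollary.** Let `φ : M_{d₁}(ℂ) → M_{d₂}(ℂ)` be a quasi-pure completely positive map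
with minimal Choi–Kraus decomposition `φ(X) = ∑ⱼ Lⱼ* X Lⱼ` (the `Lⱼ` linearly
independent). Then `ker Lᵢ = ker Lⱼ` for all `i, j`. -/
theorem ker_kraus_eq_of_isQuasiPureMat
    {d₁ d₂ k : ℕ}
    (φ : Matrix (Fin d₁) (Fin d₁) ℂ →ₗ[ℂ] Matrix (Fin d₂) (Fin d₂) ℂ)
    (hφ : IsCPMap φ) (hqp : IsQuasiPureMat φ)
    (L : Fin k → Matrix (Fin d₁) (Fin d₂) ℂ)
    (hLindep : LinearIndependent ℂ L)
    (hdec : ∀ X, φ X = ∑ j, (L j).conjTranspose * X * L j) :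
    ∀ i j : Fin k, LinearMap.ker (L i).mulVecLin = LinearMap.ker (L j).mulVecLin := by
  classical
  obtain ⟨K, π, V, hSt, _hmin, hcyc⟩ := hqp
  have abstractGram : ∀ (X Y : Matrix (Fin d₁) (Fin d₁) ℂ) (h' g' : EuclideanSpace ℂ (Fin d₂)),
      (inner ℂ (π X (V h')) (π Y (V g')) : ℂ) = inner ℂ (myB L X h') (myB L Y g') := by
    intro X Y h' g'
    rw [inner_myB]
    have h1 : (inner ℂ (π X (V h')) (π Y (V g')) : ℂ)
        = inner ℂ (V h') ((ContinuousLinearMap.adjoint (π X)) (π Y (V g'))) :=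
      (ContinuousLinearMap.adjoint_inner_right _ _ _).symm
    have h2 : ContinuousLinearMap.adjoint (π X) = π (star X) := by
      rw [← ContinuousLinearMap.star_eq_adjoint, ← map_star]
    have h3 : π (star X) (π Y (V g')) = π (star X * Y) (V g') := by
      rw [_root_.map_mul]; rfl
    have h4 : (inner ℂ (V h') (π (star X * Y) (V g')) : ℂ)
        = inner ℂ h' ((ContinuousLinearMap.adjoint V) (π (star X * Y) (V g'))) :=
      (ContinuousLinearMap.adjoint_inner_right _ _ _).symm
    have h5 : (ContinuousLinearMap.adjoint V) (π (star X * Y) (V g'))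
        = Matrix.toEuclideanCLM (𝕜 := ℂ) (φ (star X * Y)) g' := by
      have h6 := hSt (star X * Y)
      calc (ContinuousLinearMap.adjoint V) (π (star X * Y) (V g'))
          = ((ContinuousLinearMap.adjoint V).comp ((π (star X * Y)).comp V)) g' := rfl
        _ = (((matCLM d₂).comp φ) (star X * Y)) g' := by rw [h6]
        _ = _ := rfl
    rw [h1, h2, h3, h4, h5]
    congr 2
    rw [hdec]
    simp [Matrix.star_eq_conjTranspose]
  have key : ∀ (i : Fin k) (h : EuclideanSpace ℂ (Fin d₂)), L i *ᵥ h = 0 →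
      ∀ j, L j *ᵥ h = 0 := by
    intro i h hih j
    by_contra hj₀
    obtain ⟨a₀, ha₀'⟩ := Function.ne_iff.mp hj₀
    have ha₀ : (L j *ᵥ h) a₀ ≠ 0 := by simpa using ha₀'
    have hVne : V h ≠ 0 := by
      intro h0
      have hg := abstractGram 1 1 h h
      rw [_root_.map_one] at hg
      simp only [ContinuousLinearMap.one_apply] at hg
      rw [h0] at hg
      simp only [inner_zero_right] at hg
      have hB0 : myB L 1 h = 0 := by
        rw [← inner_self_eq_zero (𝕜 := ℂ)]; exact hg.symm
      have hB1 := congrFun (congrArg WithLp.ofLp hB0) (j, a₀)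
      rw [myB_apply, Matrix.one_mul] at hB1
      exact ha₀ (by simpa using hB1)
    have hcy := hcyc h hVne
    let T : Matrix (Fin d₁) (Fin d₁) ℂ →ₗ[ℂ] K.carrier :=
      { toFun := fun X => π X (V h)
        map_add' := fun X Y => by simp [_root_.map_add]
        map_smul' := fun c X => by simp [_root_.map_smul] }
    have hrange : ∀ w : K.carrier, ∃ X, π X (V h) = w := by
      intro w
      have hle : Submodule.span ℂ {k' : K.carrier | ∃ X, k' = π X (V h)}
          ≤ LinearMap.range T := by
        rw [Submodule.span_le]; rintro _ ⟨X, rfl⟩; exact ⟨X, rfl⟩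
      have hcl : IsClosed ((LinearMap.range T : Submodule ℂ K.carrier) : Set K.carrier) :=
        Submodule.closed_of_finiteDimensional _
      have htop : (⊤ : Submodule ℂ K.carrier) ≤ LinearMap.range T := by
        rw [← hcy]
        refine le_trans (Submodule.topologicalClosure_mono hle) ?_
        rw [hcl.submodule_topologicalClosure_eq]
      obtain ⟨X, hX⟩ := htop (Submodule.mem_top)
      exact ⟨X, hX⟩
    set genSet : Set ((EuclideanSpace ℂ (Fin k × Fin d₁)) × K.carrier) :=
      {q | ∃ X h', q = (myB L X h', π X (V h'))} with hgen
    set G := Submodule.span ℂ genSet with hG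
    have hGram : ∀ q ∈ G, ∀ q' ∈ G, (inner ℂ q.1 q'.1 : ℂ) = inner ℂ q.2 q'.2 := by
      intro q hq
      induction hq using Submodule.span_induction with
      | mem x hx =>
        intro q' hq'
        induction hq' using Submodule.span_induction with
        | mem y hy =>
          obtain ⟨X, h', rfl⟩ := hx
          obtain ⟨Y, g', rfl⟩ := hy
          exact (abstractGram X Y h' g').symm
        | zero => simp
        | add y z hy hz ihy ihz => simp [inner_add_right, ihy, ihz]
        | smul a y hy ihy => simp [inner_smul_right, ihy]
      | zero => intro q' hq'; simp
      | add x y hx hy ihx ihy => intro q' hq'; simp [inner_add_left, ihx q' hq', ihy q' hq']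
      | smul a x hx ihx => intro q' hq'; simp [inner_smul_left, ihx q' hq']
    have hfst : ∀ v : EuclideanSpace ℂ (Fin k × Fin d₁), ∃ w, (v, w) ∈ G := by
      intro v
      have hmap : Submodule.map
          (LinearMap.fst ℂ (EuclideanSpace ℂ (Fin k × Fin d₁)) K.carrier) G = ⊤ := by
        rw [hG, Submodule.map_span]
        have himg : (LinearMap.fst ℂ (EuclideanSpace ℂ (Fin k × Fin d₁)) K.carrier) '' genSet
            = {v : EuclideanSpace ℂ (Fin k × Fin d₁) | ∃ X h', v = myB L X h'} := by
          ext v'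
          constructor
          · rintro ⟨q, ⟨X, h', rfl⟩, rfl⟩; exact ⟨X, h', rfl⟩
          · rintro ⟨X, h', rfl⟩; exact ⟨(myB L X h', π X (V h')), ⟨X, h', rfl⟩, rfl⟩
        rw [himg, spanTop L hLindep]
      have hv : v ∈ Submodule.map
          (LinearMap.fst ℂ (EuclideanSpace ℂ (Fin k × Fin d₁)) K.carrier) G := by
        rw [hmap]; trivial
      obtain ⟨q, hqG, hq1⟩ := hv
      refine ⟨q.2, ?_⟩
      have hvq : (v, q.2) = q := by rw [← hq1]; exact Prod.mk.eta
      rwa [hvq]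
    set u : EuclideanSpace ℂ (Fin k × Fin d₁) := EuclideanSpace.single (i, a₀) (1:ℂ) with hu
    have hu_orth : ∀ X : Matrix (Fin d₁) (Fin d₁) ℂ, (inner ℂ u (myB L X h) : ℂ) = 0 := by
      intro X
      rw [hu, EuclideanSpace.inner_single_left]
      rw [myB_apply]
      rw [← Matrix.mulVec_mulVec, hih]
      simp
    obtain ⟨w, hw⟩ := hfst u
    obtain ⟨X₀, hX₀⟩ := hrange w
    have hqgen : ((myB L X₀ h, π X₀ (V h)) :
        (EuclideanSpace ℂ (Fin k × Fin d₁)) × K.carrier) ∈ G :=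
      Submodule.subset_span ⟨X₀, h, rfl⟩
    have hdiffG : ((myB L X₀ h - u, π X₀ (V h) - w) :
        (EuclideanSpace ℂ (Fin k × Fin d₁)) × K.carrier) ∈ G := by
      have hsub := Submodule.sub_mem G hqgen hw
      simpa using hsub
    have h0 : (inner ℂ (myB L X₀ h - u) (myB L X₀ h - u) : ℂ) = 0 := by
      have hgr := hGram _ hdiffG _ hdiffG
      simp only at hgr
      rw [hgr, hX₀, sub_self, inner_zero_right]
    have heq : myB L X₀ h = u := sub_eq_zero.mp (inner_self_eq_zero.mp h0)
    have h2 := hu_orth X₀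
    rw [heq] at h2
    have hune : u ≠ 0 := by
      intro h0'
      have h3 := congrFun (congrArg WithLp.ofLp h0') (i, a₀)
      rw [hu] at h3
      simp [EuclideanSpace.single_apply] at h3
    exact hune (inner_self_eq_zero.mp h2)
  intro i j
  ext x
  simp only [LinearMap.mem_ker, Matrix.mulVecLin_apply]
  exact ⟨fun hx => key i (WithLp.toLp 2 x) hx j, fun hx => key j (WithLp.toLp 2 x) hx i⟩
end
end

section
/- Every quasi-pure entanglement breaking completely positive map φ : M_{d1}(ℂ) → M_{d2}(ℂ) is of the form φ(X) = trace(ρX)·|v⟩⟨v| for some positive semidefinite matrix ρ ∈ M_{d1}(ℂ) and some unit vector v ∈ ℂ^{d2}. -/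
/-!
A Kraus decomposition `φ X = ∑ Lⱼᴴ X Lⱼ` gives the concrete dilation `Φ X h = (X Lⱼ h)ⱼ`, which
has the same Gram data `⟪Φ X h, Φ Y h'⟫ = ⟪h, φ (Xᴴ Y) h'⟫` as the minimal Stinespring dilation.
Cyclicity of every nonzero `V h` therefore says that each `Φ Y h'` is of the form `Φ X h` as soon
as `Φ 1 h ≠ 0`. If some nonzero `Lₗ` killed `h` while `Lⱼ h ≠ 0`, pick `h'` with `Lₗ h' ≠ 0`: the
`l`-th entry of `Φ 1 h' = Φ X h` gives `Lₗ h' = X Lₗ h = 0`. So all nonzero Kraus operators share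
one kernel, which for rank-one operators is `(ℂ v)ᗮ` with `‖v‖ = 1`; then `Lⱼ = |bⱼ⟩⟨v|` and
`φ X = ∑ ⟨bⱼ, X bⱼ⟩ |v⟩⟨v| = tr (ρ X) |v⟩⟨v|` with `ρ = ∑ |bⱼ⟩⟨bⱼ|`.
-/

noncomputable section

open scoped ComplexOrder

/-- A completely positive map between matrix algebras is *entanglement breaking* if it
admits a (not necessarily minimal) Choi–Kraus decomposition `φ(X) = ∑ⱼ Lⱼ* X Lⱼ` in which
every `Lⱼ` has rank one. -/
def IsEntanglementBreaking {d₁ d₂ : ℕ}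
    (φ : Matrix (Fin d₁) (Fin d₁) ℂ →ₗ[ℂ] Matrix (Fin d₂) (Fin d₂) ℂ) : Prop :=
  ∃ (k : ℕ) (L : Fin k → Matrix (Fin d₁) (Fin d₂) ℂ),
    (∀ j, (L j).rank = 1) ∧ ∀ X, φ X = ∑ j, (L j).conjTranspose * X * L j


open Matrix
open scoped InnerProductSpace

theorem LinearMap.surjective_of_topologicalClosure_span_range_eq_top
    {𝕜 A K : Type*} [NontriviallyNormedField 𝕜] [CompleteSpace 𝕜]
    [AddCommGroup A] [Module 𝕜 A] [FiniteDimensional 𝕜 A]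
    [NormedAddCommGroup K] [NormedSpace 𝕜 K] (T : A →ₗ[𝕜] K)
    (hT : (Submodule.span 𝕜 (Set.range T)).topologicalClosure = ⊤) :
    Function.Surjective T := by
  rw [← LinearMap.coe_range, Submodule.span_eq,
    (LinearMap.range T).closed_of_finiteDimensional.submodule_topologicalClosure_eq] at hT
  exact LinearMap.range_eq_top.mp hT

section QuasiPure

variable {A : Type*} [Ring A] [StarRing A] [Algebra ℂ A] [FiniteDimensional ℂ A]
  {H : Type} [NormedAddCommGroup H] [InnerProductSpace ℂ H] [CompleteSpace H]
  {E : Type*} [NormedAddCommGroup E] [InnerProductSpace ℂ E]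

theorem IsQuasiPure.exists_apply_eq_of_inner_eq {φ : A →ₗ[ℂ] (H →L[ℂ] H)} (hφ : IsQuasiPure φ)
    (Φ : A → H → E) (hΦ : ∀ X Y h h', ⟪h, φ (star X * Y) h'⟫_ℂ = ⟪Φ X h, Φ Y h'⟫_ℂ)
    {h : H} (hh : Φ 1 h ≠ 0) (Y : A) (h' : H) : ∃ X, Φ X h = Φ Y h' := by
  obtain ⟨K, π, V, hV, -, hcyc⟩ := hφ
  have hgram : ∀ X Y h h', ⟪π X (V h), π Y (V h')⟫_ℂ = ⟪Φ X h, Φ Y h'⟫_ℂ := by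
    intro X Y h h'
    rw [← hΦ, hV, ContinuousLinearMap.comp_apply, ContinuousLinearMap.comp_apply,
      ContinuousLinearMap.adjoint_inner_right, map_mul, map_star, mul_apply_eq_comp,
      ContinuousLinearMap.star_eq_adjoint, ContinuousLinearMap.adjoint_inner_right]
  have hVh : V h ≠ 0 := by
    intro h0
    apply hh
    rw [← inner_self_eq_zero (𝕜 := ℂ), ← hgram, h0, map_zero, inner_zero_left]
  let T : A →ₗ[ℂ] K.carrier :=
    (ContinuousLinearMap.apply ℂ K.carrier (V h)).toLinearMap ∘ₗ π.toLinearMap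
  have hrange : {k | ∃ X, k = π X (V h)} = Set.range T := by
    ext k
    simp [T, eq_comm]
  obtain ⟨X, hX⟩ := T.surjective_of_topologicalClosure_span_range_eq_top
    (hrange ▸ hcyc h hVh) (π Y (V h'))
  replace hX : π X (V h) = π Y (V h') := hX
  refine ⟨X, sub_eq_zero.mp ((inner_self_eq_zero (𝕜 := ℂ)).mp ?_)⟩
  simp only [inner_sub_left, inner_sub_right, ← hgram, hX, sub_self]

end QuasiPure

section Kraus

variable {m n ι : Type*} [Fintype m] [Fintype n] [Fintype ι] [DecidableEq m] [DecidableEq n]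

theorem Matrix.inner_toEuclideanLin_conjTranspose_mul (A B : Matrix m n ℂ)
    (x y : EuclideanSpace ℂ n) :
    ⟪x, toEuclideanLin (Aᴴ * B) y⟫_ℂ = ⟪toEuclideanLin A x, toEuclideanLin B y⟫_ℂ := by
  rw [Matrix.toLpLin_mul, LinearMap.comp_apply, toEuclideanLin_conjTranspose_eq_adjoint,
    LinearMap.adjoint_inner_right]

theorem Matrix.inner_toEuclideanLin_sum_conjTranspose_mul_mul (L : ι → Matrix m n ℂ)
    (X Y : Matrix m m ℂ) (x y : EuclideanSpace ℂ n) :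
    ⟪x, toEuclideanLin (∑ i, (L i)ᴴ * (Xᴴ * Y) * L i) y⟫_ℂ =
      ∑ i, ⟪toEuclideanLin X (toEuclideanLin (L i) x),
        toEuclideanLin Y (toEuclideanLin (L i) y)⟫_ℂ := by
  simp only [map_sum, LinearMap.sum_apply, inner_sum]
  refine Finset.sum_congr rfl fun i _ => ?_
  rw [show (L i)ᴴ * (Xᴴ * Y) * L i = (X * L i)ᴴ * (Y * L i) by
      simp only [conjTranspose_mul, Matrix.mul_assoc],
    inner_toEuclideanLin_conjTranspose_mul, Matrix.toLpLin_mul, Matrix.toLpLin_mul]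
  rfl

end Kraus

theorem IsQuasiPureMat.ker_le_ker_of_kraus {d₁ d₂ : ℕ} {ι : Type*} [Fintype ι]
    {φ : Matrix (Fin d₁) (Fin d₁) ℂ →ₗ[ℂ] Matrix (Fin d₂) (Fin d₂) ℂ} (hφ : IsQuasiPureMat φ)
    {L : ι → Matrix (Fin d₁) (Fin d₂) ℂ} (hL : ∀ X, φ X = ∑ i, (L i)ᴴ * X * L i)
    {i j : ι} (hj : L j ≠ 0) :
    LinearMap.ker (toEuclideanLin (L j)) ≤ LinearMap.ker (toEuclideanLin (L i)) := by
  intro h hjh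
  by_contra hih
  rw [LinearMap.mem_ker] at hjh hih
  let Φ (X : Matrix (Fin d₁) (Fin d₁) ℂ) (h : EuclideanSpace ℂ (Fin d₂)) :
      PiLp 2 fun _ : ι => EuclideanSpace ℂ (Fin d₁) :=
    WithLp.toLp 2 fun i => toEuclideanLin X (toEuclideanLin (L i) h)
  have hΦ : ∀ X Y h h', ⟪h, ((matCLM d₂).comp φ) (star X * Y) h'⟫_ℂ = ⟪Φ X h, Φ Y h'⟫_ℂ := by
    intro X Y h h'
    change ⟪h, toEuclideanLin (φ (Xᴴ * Y)) h'⟫_ℂ = _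
    rw [hL, inner_toEuclideanLin_sum_conjTranspose_mul_mul, PiLp.inner_apply]
  have hΦh : Φ 1 h ≠ 0 := fun h0 => hih (by simpa [Φ] using congrArg (· i) h0)
  obtain ⟨h', hh'⟩ := DFunLike.ne_iff.mp ((LinearEquiv.map_ne_zero_iff toEuclideanLin).mpr hj)
  obtain ⟨X, hX⟩ := hφ.exists_apply_eq_of_inner_eq Φ hΦ hΦh 1 h'
  exact hh' (by simpa [Φ, hjh] using (congrArg (· j) hX).symm)

theorem Matrix.exists_eq_vecMulVec_of_rank_le_one {m n K : Type*} [Fintype n] [DecidableEq n]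
    [Field K] {L : Matrix m n K} (hL : L.rank ≤ 1) : ∃ a w, L = vecMulVec a w := by
  obtain ⟨a, ha⟩ := finrank_le_one_iff.mp hL
  choose w hw using fun s =>
    ha ⟨L *ᵥ Pi.single s 1, LinearMap.mem_range.mpr ⟨Pi.single s 1, rfl⟩⟩
  refine ⟨a, w, Matrix.ext fun i s => ?_⟩
  simpa [mulVec_single, vecMulVec_apply, mul_comm] using
    (congrFun (congrArg Subtype.val (hw s)) i).symm

theorem Matrix.exists_norm_eq_one_orthogonal_le_ker {m n : Type*} [Fintype n] [DecidableEq n]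
    [Nonempty n] {L : Matrix m n ℂ} (hL : L.rank ≤ 1) :
    ∃ v : EuclideanSpace ℂ n, ‖v‖ = 1 ∧ (ℂ ∙ v)ᗮ ≤ LinearMap.ker (toEuclideanLin L) := by
  obtain ⟨a, w, rfl⟩ := exists_eq_vecMulVec_of_rank_le_one hL
  by_cases hw : w = 0
  · obtain ⟨v, hv⟩ := exists_norm_eq (EuclideanSpace ℂ n) zero_le_one
    refine ⟨v, hv, fun h _ => ?_⟩
    ext i
    simp [vecMulVec_mulVec, hw]
  set x : EuclideanSpace ℂ n := WithLp.toLp 2 (star w)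
  have hx : x ≠ 0 := by simpa [x] using hw
  refine ⟨(‖x‖⁻¹ : ℂ) • x, norm_smul_inv_norm hx, ?_⟩
  rw [Submodule.span_singleton_smul_eq (by simpa using hx)]
  intro h hh
  rw [Submodule.mem_orthogonal_singleton_iff_inner_right] at hh
  simp only [x, EuclideanSpace.inner_eq_star_dotProduct, star_star] at hh
  ext i
  simp [vecMulVec_mulVec, dotProduct_comm w, hh]

theorem Matrix.eq_vecMulVec_of_orthogonal_le_ker {m n : Type*} [Fintype n] [DecidableEq n]
    {L : Matrix m n ℂ} {v : EuclideanSpace ℂ n} (hv : ‖v‖ = 1)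
    (hL : (ℂ ∙ v)ᗮ ≤ LinearMap.ker (toEuclideanLin L)) :
    L = vecMulVec (L *ᵥ v) (star v) := by
  refine toEuclideanLin.injective (LinearMap.ext fun h => ?_)
  have hproj : h - ⟪v, h⟫_ℂ • v ∈ (ℂ ∙ v)ᗮ := by
    rw [Submodule.mem_orthogonal_singleton_iff_inner_right, inner_sub_right, inner_smul_right,
      inner_self_eq_norm_sq_to_K, hv]
    simp
  have := hL hproj
  rw [LinearMap.mem_ker, map_sub, map_smul, sub_eq_zero] at this
  rw [this]
  ext i
  simp [vecMulVec_mulVec, EuclideanSpace.inner_eq_star_dotProduct, dotProduct_comm, mul_comm]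

theorem Matrix.sum_conjTranspose_mul_mul_eq_trace_smul {m n ι R : Type*} [Fintype m] [Fintype ι]
    [CommRing R] [StarRing R] {L : ι → Matrix m n R} {b : ι → m → R} {u : n → R}
    (hL : ∀ i, L i = vecMulVec (b i) u) (X : Matrix m m R) :
    ∑ i, (L i)ᴴ * X * L i =
      ((∑ i, vecMulVec (b i) (star (b i))) * X).trace • vecMulVec (star u) u := by
  simp only [hL, conjTranspose_vecMulVec, vecMulVec_mul, Finset.sum_mul, trace_sum,
    trace_vecMulVec, Finset.sum_smul, vecMul_vecMulVec, vecMulVec_smul, dotProduct_comm]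

theorem isQuasiPure_entanglementBreaking_form_general
    {d₁ d₂ : ℕ} (hd₂ : 0 < d₂)
    (φ : Matrix (Fin d₁) (Fin d₁) ℂ →ₗ[ℂ] Matrix (Fin d₂) (Fin d₂) ℂ)
    (hqp : IsQuasiPureMat φ) (hEB : IsEntanglementBreaking φ) :
    ∃ (ρ : Matrix (Fin d₁) (Fin d₁) ℂ) (v : EuclideanSpace ℂ (Fin d₂)),
      ρ.PosSemidef ∧ ‖v‖ = 1 ∧
      ∀ X, φ X = (ρ * X).trace •
        Matrix.vecMulVec (fun i => v i) (fun j => star (v j)) := by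
  obtain ⟨k, L, hrank, hφL⟩ := hEB
  have : Nonempty (Fin d₂) := ⟨⟨0, hd₂⟩⟩
  obtain ⟨v, hv, hker⟩ : ∃ v : EuclideanSpace ℂ (Fin d₂),
      ‖v‖ = 1 ∧ ∀ j, (ℂ ∙ v)ᗮ ≤ LinearMap.ker (toEuclideanLin (L j)) := by
    rcases k.eq_zero_or_pos with rfl | hk
    · obtain ⟨v, hv⟩ := exists_norm_eq (EuclideanSpace ℂ (Fin d₂)) zero_le_one
      exact ⟨v, hv, finZeroElim⟩
    · obtain ⟨v, hv, hker⟩ := exists_norm_eq_one_orthogonal_le_ker (hrank ⟨0, hk⟩).le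
      have hL₀ : L ⟨0, hk⟩ ≠ 0 := fun h0 => by simpa [h0] using hrank ⟨0, hk⟩
      exact ⟨v, hv, fun j => hker.trans (hqp.ker_le_ker_of_kraus hφL hL₀)⟩
  refine ⟨∑ j, vecMulVec (L j *ᵥ v) (star (L j *ᵥ v)), v,
    posSemidef_iff_eq_sum_vecMulVec.mpr ⟨k, _, rfl⟩, hv, fun X => ?_⟩
  rw [hφL, sum_conjTranspose_mul_mul_eq_trace_smul
    (fun j => eq_vecMulVec_of_orthogonal_le_ker hv (hker j)), star_star]
  rfl

/-- **Theorem.** Every quasi-pure entanglement breaking completely positive map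
`φ : M_{d₁}(ℂ) → M_{d₂}(ℂ)` has the form `φ(X) = trace(ρX) · |v⟩⟨v|` for some positive
semidefinite `ρ ∈ M_{d₁}(ℂ)` and some unit vector `v ∈ ℂ^{d₂}`. -/
theorem isQuasiPure_entanglementBreaking_form
    {d₁ d₂ : ℕ} (hd₂ : 0 < d₂)
    (φ : Matrix (Fin d₁) (Fin d₁) ℂ →ₗ[ℂ] Matrix (Fin d₂) (Fin d₂) ℂ)
    (hφ : IsCPMap φ) (hqp : IsQuasiPureMat φ) (hEB : IsEntanglementBreaking φ) :
    ∃ (ρ : Matrix (Fin d₁) (Fin d₁) ℂ) (v : EuclideanSpace ℂ (Fin d₂)),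
      ρ.PosSemidef ∧ ‖v‖ = 1 ∧
      ∀ X, φ X = (ρ * X).trace •
        Matrix.vecMulVec (fun i => v i) (fun j => star (v j)) :=
  isQuasiPure_entanglementBreaking_form_general hd₂ φ hqp hEB
end
end

section
/- A non-zero completely positive map φ : M_{d1}(ℂ) → M_{d2}(ℂ) is pure if and only if it has the form φ(X) = L* X L for some non-zero d1 × d2 complex matrix L. -/
noncomputable section

open scoped ComplexOrder InnerProductSpace

/-- A completely positive map is *pure* if every completely positive map it dominates
is a scalar multiple `t • φ` with `t ∈ [0,1]`. -/
def IsPureCP {A B : Type*} [Ring A] [StarRing A] [Module ℂ A]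
    [Ring B] [StarRing B] [Module ℂ B] (φ : A →ₗ[ℂ] B) : Prop :=
  ∀ ψ : A →ₗ[ℂ] B, IsCPMap ψ → IsCPMap (φ - ψ) → ∃ t : ℝ, 0 ≤ t ∧ t ≤ 1 ∧ ψ = (t : ℂ) • φ

namespace PureCPAux

lemma sum_perm6 {α₁ α₂ α₃ α₄ α₅ α₆ M : Type*} [Fintype α₁] [Fintype α₂] [Fintype α₃]
    [Fintype α₄] [Fintype α₅] [Fintype α₆] [AddCommMonoid M]
    (f : α₁ → α₂ → α₃ → α₄ → α₅ → α₆ → M) :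
    ∑ p, ∑ q, ∑ s1, ∑ s2, ∑ k, ∑ r, f p q s1 s2 k r
      = ∑ s1, ∑ s2, ∑ k, ∑ r, ∑ q, ∑ p, f p q s1 s2 k r := by
  rw [Finset.sum_comm]
  conv_lhs => enter [2, q]; rw [Finset.sum_comm]
  conv_lhs => enter [2, q, 2, s1]; rw [Finset.sum_comm]
  conv_lhs => enter [2, q, 2, s1, 2, s2]; rw [Finset.sum_comm]
  conv_lhs => enter [2, q, 2, s1, 2, s2, 2, k]; rw [Finset.sum_comm]
  rw [Finset.sum_comm]
  conv_lhs => enter [2, s1]; rw [Finset.sum_comm]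
  conv_lhs => enter [2, s1, 2, s2]; rw [Finset.sum_comm]
  conv_lhs => enter [2, s1, 2, s2, 2, k]; rw [Finset.sum_comm]


open Matrix

variable {d₁ d₂ : ℕ}

lemma posSemidef_iff_eq_transpose_mul_self {ι : Type*} [Fintype ι] [DecidableEq ι]
    {M : Matrix ι ι ℂ} : M.PosSemidef ↔ ∃ B : Matrix ι ι ℂ, M = Bᴴ * B := by
  open scoped MatrixOrder in
  constructor
  · intro h
    obtain ⟨B, hB⟩ := CStarAlgebra.nonneg_iff_eq_star_mul_self.mp h.nonneg
    exact ⟨B, hB⟩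
  · rintro ⟨B, rfl⟩
    exact posSemidef_conjTranspose_mul_self B

/-- Flatten a matrix of matrices into a big matrix. -/
def flat {m p : Type*} (M : Matrix m m (Matrix p p ℂ)) : Matrix (m × p) (m × p) ℂ :=
  fun x y => M x.1 y.1 x.2 y.2

/-- Unflatten. -/
def unflat {m p : Type*} (M : Matrix (m × p) (m × p) ℂ) : Matrix m m (Matrix p p ℂ) :=
  fun i j => fun a b => M (i, a) (j, b)

lemma flat_inj {m p : Type*} : Function.Injective (flat (m := m) (p := p)) := by
  intro M N h
  ext i j a b
  exact congrFun (congrFun h (i, a)) (j, b)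

lemma flat_unflat {m p : Type*} (M : Matrix (m × p) (m × p) ℂ) : flat (unflat M) = M := by
  ext ⟨i, a⟩ ⟨j, b⟩; rfl

lemma flat_conjTranspose_mul {m p : Type*} [Fintype m] [Fintype p]
    (P Q : Matrix m m (Matrix p p ℂ)) :
    flat (Pᴴ * Q) = (flat P)ᴴ * flat Q := by
  ext ⟨i, a⟩ ⟨j, b⟩
  simp only [flat, Matrix.mul_apply, conjTranspose_apply, Matrix.sum_apply, star_apply,
    Fintype.sum_prod_type]

/-- Being a "square" `Pᴴ * P` of block matrices is the same as flattened positive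
semidefiniteness. -/
lemma exists_sq_iff {m p : Type*} [Fintype m] [Fintype p] [DecidableEq m] [DecidableEq p]
    (M : Matrix m m (Matrix p p ℂ)) :
    (∃ P : Matrix m m (Matrix p p ℂ), M = Pᴴ * P) ↔ (flat M).PosSemidef := by
  constructor
  · rintro ⟨P, rfl⟩
    rw [flat_conjTranspose_mul]
    exact posSemidef_conjTranspose_mul_self _
  · intro h
    obtain ⟨A, hA⟩ := posSemidef_iff_eq_transpose_mul_self.mp h
    refine ⟨unflat A, flat_inj ?_⟩
    rw [flat_conjTranspose_mul, flat_unflat, ← hA]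

/-- The Choi matrix of a linear map. -/
def choi (φ : Matrix (Fin d₁) (Fin d₁) ℂ →ₗ[ℂ] Matrix (Fin d₂) (Fin d₂) ℂ) :
    Matrix (Fin d₁ × Fin d₂) (Fin d₁ × Fin d₂) ℂ :=
  fun x y => φ (Matrix.single x.1 y.1 1) x.2 y.2

/-- Reconstruct a linear map from its Choi matrix. -/
def toMap (C : Matrix (Fin d₁ × Fin d₂) (Fin d₁ × Fin d₂) ℂ) :
    Matrix (Fin d₁) (Fin d₁) ℂ →ₗ[ℂ] Matrix (Fin d₂) (Fin d₂) ℂ where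
  toFun X := fun a b => ∑ i, ∑ j, X i j * C (i, a) (j, b)
  map_add' X Y := by
    ext a b
    simp [add_mul, Finset.sum_add_distrib]
    rfl
  map_smul' c X := by
    ext a b
    simp [Matrix.smul_apply, Finset.mul_sum, mul_assoc]
    change _ = c * ∑ i, ∑ j, X i j * C (i, a) (j, b)
    simp [Finset.mul_sum]

lemma choi_toMap (C : Matrix (Fin d₁ × Fin d₂) (Fin d₁ × Fin d₂) ℂ) : choi (toMap C) = C := by
  ext ⟨i, a⟩ ⟨j, b⟩
  simp [choi, toMap, Matrix.single, ite_and, Finset.sum_ite_eq]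
  change ∑ i', ∑ j', (of fun i' j' => if i = i' then if j = j' then (1:ℂ) else 0 else 0) i' j'
    * C (i', a) (j', b) = _
  simp [Finset.sum_ite_eq]

lemma toMap_choi (φ : Matrix (Fin d₁) (Fin d₁) ℂ →ₗ[ℂ] Matrix (Fin d₂) (Fin d₂) ℂ) :
    toMap (choi φ) = φ := by
  apply LinearMap.ext
  intro X
  ext a b
  show ∑ i, ∑ j, X i j * φ (Matrix.single i j 1) a b = φ X a b
  conv_rhs => rw [matrix_eq_sum_single X]
  rw [map_sum, Matrix.sum_apply]
  refine Finset.sum_congr rfl fun i _ => ?_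
  rw [map_sum, Matrix.sum_apply]
  refine Finset.sum_congr rfl fun j _ => ?_
  have h : Matrix.single i j (X i j) = X i j • Matrix.single i j (1:ℂ) := by
    rw [smul_single, smul_eq_mul, mul_one]
  rw [h, _root_.map_smul, Matrix.smul_apply, smul_eq_mul]

lemma choi_inj : Function.Injective (choi (d₁ := d₁) (d₂ := d₂)) := by
  intro φ ψ h
  rw [← toMap_choi φ, ← toMap_choi ψ, h]

lemma choi_sub (φ ψ : Matrix (Fin d₁) (Fin d₁) ℂ →ₗ[ℂ] Matrix (Fin d₂) (Fin d₂) ℂ) :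
    choi (φ - ψ) = choi φ - choi ψ := by
  ext ⟨i, a⟩ ⟨j, b⟩
  simp [choi]

lemma choi_smul (c : ℂ) (φ : Matrix (Fin d₁) (Fin d₁) ℂ →ₗ[ℂ] Matrix (Fin d₂) (Fin d₂) ℂ) :
    choi (c • φ) = c • choi φ := by
  ext ⟨i, a⟩ ⟨j, b⟩
  simp [choi]

/-- Choi's theorem, forward direction. -/
lemma choi_posSemidef {φ : Matrix (Fin d₁) (Fin d₁) ℂ →ₗ[ℂ] Matrix (Fin d₂) (Fin d₂) ℂ}
    (hφ : IsCPMap φ) : (choi φ).PosSemidef := by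
  rcases Nat.eq_zero_or_pos d₁ with h0 | hpos
  · refine PosSemidef.of_dotProduct_mulVec_nonneg ?_ ?_
    · ext ⟨x1, x2⟩ y
      exact absurd x1.2 (by omega)
    · intro x
      have : (Finset.univ : Finset (Fin d₁ × Fin d₂)) = ∅ := by
        ext ⟨x1, x2⟩; exact absurd x1.2 (by omega)
      simp [dotProduct, this]
  · have k₀ : Fin d₁ := ⟨0, hpos⟩
    set N : Matrix (Fin d₁) (Fin d₁) (Matrix (Fin d₁) (Fin d₁) ℂ) :=
      fun k j => if k = k₀ then Matrix.single k₀ j 1 else 0 with hN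
    set M : Matrix (Fin d₁) (Fin d₁) (Matrix (Fin d₁) (Fin d₁) ℂ) :=
      fun i j => Matrix.single i j 1 with hMdef
    have hM : M = Nᴴ * N := by
      funext i j
      rw [Matrix.mul_apply, Finset.sum_eq_single k₀ (fun k _ hk => by
        simp [hN, conjTranspose_apply, hk]) (by simp)]
      have h1 : (star (Matrix.single k₀ i (1:ℂ)) : Matrix (Fin d₁) (Fin d₁) ℂ)
          = Matrix.single i k₀ 1 := by
        ext p q
        simp [Matrix.single, conjTranspose_apply, and_comm]
      show Matrix.single i j 1 = Nᴴ i k₀ * N k₀ j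
      rw [conjTranspose_apply, show N k₀ i = Matrix.single k₀ i 1 from if_pos rfl,
        show N k₀ j = Matrix.single k₀ j 1 from if_pos rfl, h1,
        single_mul_single_same, one_mul]
    obtain ⟨P, hP⟩ := hφ d₁ M ⟨N, hM⟩
    have hflat : choi φ = flat (M.map φ) := by
      ext ⟨i, a⟩ ⟨j, b⟩
      rfl
    rw [hflat, hP, flat_conjTranspose_mul]
    exact posSemidef_conjTranspose_mul_self _

/-- Choi's theorem, reverse direction. -/
lemma isCPMap_of_choi {φ : Matrix (Fin d₁) (Fin d₁) ℂ →ₗ[ℂ] Matrix (Fin d₂) (Fin d₂) ℂ}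
    (hφ : (choi φ).PosSemidef) : IsCPMap φ := by
  obtain ⟨C, hC⟩ := posSemidef_iff_eq_transpose_mul_self.mp hφ
  have hrep : ∀ (Y : Matrix (Fin d₁) (Fin d₁) ℂ) a b,
      φ Y a b = ∑ p, ∑ q, Y p q * choi φ (p, a) (q, b) := by
    intro Y a b
    conv_lhs => rw [← toMap_choi φ]
    rfl
  rintro n M ⟨N, rfl⟩
  rw [exists_sq_iff]
  set R : Matrix ((Fin d₁ × Fin d₂) × Fin n × Fin d₁) (Fin n × Fin d₂) ℂ :=
    fun s x => ∑ q, N s.2.1 x.1 s.2.2 q * C s.1 (q, x.2) with hR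
  have key : flat ((Nᴴ * N).map φ) = Rᴴ * R := by
    ext ⟨i, a⟩ ⟨j, b⟩
    show φ ((Nᴴ * N) i j) a b = (Rᴴ * R) (i, a) (j, b)
    rw [hrep]
    have hch : ∀ p q, choi φ (p, a) (q, b) = ∑ s, star (C s (p, a)) * C s (q, b) := by
      intro p q
      rw [hC, Matrix.mul_apply]
      simp [conjTranspose_apply]
    have hNN : ∀ p q, (Nᴴ * N) i j p q = ∑ k, ∑ r, star (N k i r p) * N k j r q := by
      intro p q
      rw [Matrix.mul_apply, Matrix.sum_apply]
      refine Finset.sum_congr rfl fun k _ => ?_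
      rw [Matrix.mul_apply]
      simp [conjTranspose_apply]
    simp only [hch, hNN]
    rw [Matrix.mul_apply]
    simp only [conjTranspose_apply]
    simp only [conjTranspose_apply, hR, Fintype.sum_prod_type, star_sum, star_mul',
      Finset.sum_mul, Finset.mul_sum]
    rw [sum_perm6]
    refine Finset.sum_congr rfl fun s1 _ => Finset.sum_congr rfl fun s2 _ =>
      Finset.sum_congr rfl fun k _ => Finset.sum_congr rfl fun r _ =>
      Finset.sum_congr rfl fun q _ => Finset.sum_congr rfl fun p _ => by ring
  rw [key]
  exact posSemidef_conjTranspose_mul_self _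

lemma posSemidef_vecMulVec {ι : Type*} [Fintype ι] (v : ι → ℂ) :
    (vecMulVec (star v) v).PosSemidef := by
  refine PosSemidef.of_dotProduct_mulVec_nonneg ?_ ?_
  · ext x y
    simp [conjTranspose_apply, vecMulVec_apply, mul_comm]
  · intro x
    have h : star x ⬝ᵥ (vecMulVec (star v) v *ᵥ x) = star (v ⬝ᵥ x) * (v ⬝ᵥ x) := by
      simp only [dotProduct, mulVec, vecMulVec_apply, Pi.star_apply, star_sum, star_mul',
        Finset.mul_sum, Finset.sum_mul]
      rw [Finset.sum_comm]
      refine Finset.sum_congr rfl fun i _ => Finset.sum_congr rfl fun j _ => ?_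
      ring
    rw [h]
    exact star_mul_self_nonneg _

lemma mulVec_cancel {ι : Type*} [Fintype ι] [DecidableEq ι] {S T : Matrix ι ι ℂ}
    (h : ∀ x, S *ᵥ x = T *ᵥ x) : S = T := by
  ext i j
  have := congrFun (h (Pi.single j 1)) i
  simpa [mulVec_single] using this

lemma rankOne_mulVec {ι : Type*} [Fintype ι] (v x : ι → ℂ) :
    vecMulVec (star v) v *ᵥ x = (v ⬝ᵥ x) • star v := by
  funext p
  simp only [mulVec, vecMulVec_apply, dotProduct, Pi.star_apply, Pi.smul_apply, smul_eq_mul,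
    Finset.mul_sum]
  rw [Finset.sum_mul]
  refine Finset.sum_congr rfl fun y _ => by ring

lemma hermit_dot {ι : Type*} [Fintype ι] {S : Matrix ι ι ℂ} (hS : S.IsHermitian)
    (x y : ι → ℂ) : star x ⬝ᵥ (S *ᵥ y) = star (S *ᵥ x) ⬝ᵥ y := by
  rw [star_mulVec, ← dotProduct_mulVec, hS.eq]

lemma psd_le_rankOne {ι : Type*} [Fintype ι] [DecidableEq ι] (v : ι → ℂ) (S : Matrix ι ι ℂ)
    (hS : S.PosSemidef) (hd : (vecMulVec (star v) v - S).PosSemidef) :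
    ∃ t : ℝ, 0 ≤ t ∧ t ≤ 1 ∧ S = (t : ℂ) • vecMulVec (star v) v := by
  by_cases hv : v = 0
  · refine ⟨0, le_refl _, zero_le_one, ?_⟩
    have hz : ∀ x, S *ᵥ x = 0 := by
      intro x
      rw [← hS.dotProduct_mulVec_zero_iff]
      have h1 := hS.dotProduct_mulVec_nonneg x
      have h2 := hd.dotProduct_mulVec_nonneg x
      rw [sub_mulVec, hv] at h2
      have hvv : vecMulVec (star (0 : ι → ℂ)) (0 : ι → ℂ) *ᵥ x = 0 := by
        rw [rankOne_mulVec]; simp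
      rw [hvv, zero_sub, dotProduct_neg] at h2
      exact le_antisymm (neg_nonneg.mp h2) h1
    refine mulVec_cancel (T := (0:ℂ) • vecMulVec (star v) v) fun x => ?_
    simp [hz x]
  · -- main case
    set c : ℂ := v ⬝ᵥ star v with hc
    have hc0 : 0 < c := by
      have h1 : c = star (star v) ⬝ᵥ star v := by rw [star_star]
      have h2 : c ≠ 0 := by
        rw [h1, Ne, dotProduct_star_self_eq_zero, star_eq_zero]
        exact hv
      have h3 : 0 ≤ c := by
        rw [h1]
        have := Finset.sum_nonneg (s := Finset.univ)
          (f := fun i => star (star v i) * star v i) fun i _ => star_mul_self_nonneg _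
        simpa [dotProduct] using this
      exact lt_of_le_of_ne h3 (Ne.symm h2)
    obtain ⟨hcr, hcim⟩ := Complex.pos_iff.mp hc0
    have hcre : c = (c.re : ℂ) := by
      apply Complex.ext <;> simp [← hcim]
    -- kernel on the orthogonal complement
    have claim1 : ∀ w, v ⬝ᵥ w = 0 → S *ᵥ w = 0 := by
      intro w hw
      rw [← hS.dotProduct_mulVec_zero_iff]
      have h2 := hd.dotProduct_mulVec_nonneg w
      rw [sub_mulVec, rankOne_mulVec, hw, zero_smul, zero_sub, dotProduct_neg] at h2
      exact le_antisymm (neg_nonneg.mp h2) (hS.dotProduct_mulVec_nonneg w)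
    -- S *ᵥ star v is a multiple of star v
    set β : ℂ := v ⬝ᵥ (S *ᵥ star v) with hβ
    have hβ0 : 0 ≤ β := by
      have := hS.dotProduct_mulVec_nonneg (star v)
      rwa [star_star] at this
    obtain ⟨hbr, hbim⟩ := Complex.nonneg_iff.mp hβ0
    have hβre : β = (β.re : ℂ) := by apply Complex.ext <;> simp [← hbim]
    set α : ℂ := β / c with hα
    have hu : S *ᵥ star v = α • star v := by
      set w : ι → ℂ := S *ᵥ star v - α • star v with hw
      have hvw : v ⬝ᵥ w = 0 := by
        rw [hw, dotProduct_sub, dotProduct_smul, ← hβ, ← hc, smul_eq_mul, hα,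
          div_mul_cancel₀ _ (ne_of_gt hc0), sub_self]
      have hSw : S *ᵥ w = 0 := claim1 w hvw
      have h1 : star w ⬝ᵥ (S *ᵥ star v) = 0 := by
        rw [hermit_dot hS.1, hSw]
        simp
      have h2 : star w ⬝ᵥ star v = 0 := by
        have : star w ⬝ᵥ star v = star (v ⬝ᵥ w) := by
          simp [dotProduct, star_sum, mul_comm]
        rw [this, hvw, star_zero]
      have h3 : star w ⬝ᵥ w = 0 := by
        have hsv : S *ᵥ star v = w + α • star v := by rw [hw]; abel
        calc star w ⬝ᵥ w = star w ⬝ᵥ (S *ᵥ star v) - α * (star w ⬝ᵥ star v) := by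
              rw [hsv, dotProduct_add, dotProduct_smul, smul_eq_mul]; ring
          _ = 0 := by rw [h1, h2]; ring
      have h4 : w = 0 := dotProduct_star_self_eq_zero.mp h3
      rw [hw] at h4
      exact sub_eq_zero.mp h4
    -- conclude
    set t : ℝ := β.re / (c.re * c.re) with ht
    have hαt : α = ((t : ℂ)) * c := by
      rw [hα, ht]
      rw [hcre, hβre]
      push_cast
      simp only [Complex.ofReal_re]
      field_simp
    have ht0 : 0 ≤ t := div_nonneg hbr (mul_nonneg hcr.le hcr.le)
    have ht1 : t ≤ 1 := by
      have h2 := hd.dotProduct_mulVec_nonneg (star v)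
      rw [sub_mulVec, rankOne_mulVec, hu, star_star] at h2
      have hc2 : v ⬝ᵥ ((c • star v : ι → ℂ) - α • star v) = c * c - α * c := by
        rw [dotProduct_sub]
        simp only [dotProduct_smul, smul_eq_mul, ← hc]
        try ring
      rw [← hc] at h2
      rw [hc2] at h2
      rw [hαt] at h2
      have h3 : (0:ℂ) ≤ (((1 - t) * (c.re * c.re) : ℝ) : ℂ) := by
        rw [hcre] at h2
        push_cast at h2 ⊢
        convert h2 using 1 <;> ring
      rw [Complex.zero_le_real] at h3
      nlinarith [mul_pos hcr hcr]
    refine ⟨t, ht0, ht1, mulVec_cancel fun x => ?_⟩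
    -- decompose x
    have hdx : v ⬝ᵥ (x - ((v ⬝ᵥ x) / c) • star v) = 0 := by
      rw [dotProduct_sub, dotProduct_smul, smul_eq_mul, ← hc,
        div_mul_cancel₀ _ (ne_of_gt hc0), sub_self]
    have hker := claim1 _ hdx
    rw [mulVec_sub, mulVec_smul, sub_eq_zero] at hker
    rw [hker, hu, smul_smul, smul_mulVec, rankOne_mulVec, smul_smul, hαt]
    congr 1
    field_simp

/-- A nonzero PSD matrix dominates a nonzero rank-one PSD matrix. -/
def toE {ι : Type*} (f : ι → ℂ) : EuclideanSpace ℂ ι := WithLp.toLp 2 f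

lemma exists_rankOne_le {ι : Type*} [Fintype ι] [DecidableEq ι] {C : Matrix ι ι ℂ}
    (hC : C.PosSemidef) (hC0 : C ≠ 0) :
    ∃ S : Matrix ι ι ℂ, S ≠ 0 ∧ (∃ w : ι → ℂ, S = vecMulVec (star w) w) ∧
      S.PosSemidef ∧ (C - S).PosSemidef := by
  obtain ⟨A, hA⟩ := posSemidef_iff_eq_transpose_mul_self.mp hC
  obtain ⟨u, hu⟩ : ∃ u, C *ᵥ u ≠ 0 := by
    by_contra h
    push_neg at h
    exact hC0 (mulVec_cancel (T := 0) fun x => by simp [h x])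
  have hinner : ∀ x y : ι → ℂ, star x ⬝ᵥ (C *ᵥ y) = ⟪toE (A *ᵥ x), toE (A *ᵥ y)⟫_ℂ := by
    intro x y
    rw [hA, ← mulVec_mulVec, dotProduct_mulVec, vecMul_conjTranspose, star_star]
    simp [PiLp.inner_apply, RCLike.inner_apply, dotProduct, toE, mul_comm]
  set z : ι → ℂ := C *ᵥ u with hz
  set a : EuclideanSpace ℂ ι := toE (A *ᵥ u) with ha
  have ha0 : a ≠ 0 := by
    intro h0
    apply hu
    rw [hz, hA, ← mulVec_mulVec]
    show Aᴴ *ᵥ (A *ᵥ u) = 0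
    rw [show A *ᵥ u = (0 : ι → ℂ) by simpa [ha, toE] using congrArg WithLp.ofLp h0]
    simp
  have hna : 0 < ‖a‖ := norm_pos_iff.mpr ha0
  set γ : ℝ := (‖a‖)⁻¹ with hγ
  have hγ0 : ((γ : ℂ)) ≠ 0 := by
    simp [hγ, ne_of_gt hna]
  set w : ι → ℂ := fun i => (γ : ℂ) * star (z i) with hw
  have hwdot : ∀ x : ι → ℂ, w ⬝ᵥ x = (γ : ℂ) * ⟪a, toE (A *ᵥ x)⟫_ℂ := by
    intro x
    have h1 : star z ⬝ᵥ x = star (star x ⬝ᵥ z) := by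
      simp [dotProduct, star_sum, mul_comm]
    have h2 : star x ⬝ᵥ z = ⟪toE (A *ᵥ x), a⟫_ℂ := hinner x u
    calc w ⬝ᵥ x = (γ : ℂ) * (star z ⬝ᵥ x) := by
          simp only [hw, dotProduct, Pi.star_apply, Finset.mul_sum]
          exact Finset.sum_congr rfl fun i _ => by ring
      _ = (γ : ℂ) * ⟪a, toE (A *ᵥ x)⟫_ℂ := by
          rw [h1, h2, ← inner_conj_symm]
          simp
  refine ⟨vecMulVec (star w) w, ?_, ⟨w, rfl⟩, posSemidef_vecMulVec w, ?_⟩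
  · intro h0
    obtain ⟨i0, hi0⟩ : ∃ i, z i ≠ 0 := by
      by_contra h
      push_neg at h
      exact hu (funext h)
    have h1 : star (w i0) * w i0 = 0 := by
      have := congrFun (congrFun h0 i0) i0
      simpa [vecMulVec_apply] using this
    have h1' : w i0 = 0 := by
      have : ((Complex.normSq (w i0) : ℝ) : ℂ) = 0 := by
        rw [← Complex.mul_conj (w i0)]
        rw [← h1]
        simp [Complex.star_def]
        ring
      have h2 := Complex.ofReal_eq_zero.mp this
      exact Complex.normSq_eq_zero.mp h2
    have h2 : (γ : ℂ) * star (z i0) = 0 := h1'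
    rcases mul_eq_zero.mp h2 with h | h
    · exact hγ0 h
    · exact hi0 (by simpa using star_eq_zero.mp h)
  · refine PosSemidef.of_dotProduct_mulVec_nonneg ?_ ?_
    · exact hC.1.sub (posSemidef_vecMulVec w).1
    · intro x
      rw [sub_mulVec, dotProduct_sub, rankOne_mulVec]
      set b : EuclideanSpace ℂ ι := toE (A *ᵥ x) with hb
      have hqC : star x ⬝ᵥ (C *ᵥ x) = ((‖b‖^2 : ℝ) : ℂ) := by
        rw [hinner x x]
        rw [inner_self_eq_norm_sq_to_K]
        push_cast
        rfl
      have hqS : star x ⬝ᵥ ((w ⬝ᵥ x) • star w) = ((γ^2 * ‖⟪a, b⟫_ℂ‖^2 : ℝ) : ℂ) := by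
        have h1 : star x ⬝ᵥ star w = star (w ⬝ᵥ x) := by
          simp [dotProduct, star_sum, mul_comm]
        rw [dotProduct_smul, smul_eq_mul, h1, hwdot x, star_mul']
        simp only [Complex.star_def, Complex.conj_ofReal, ← hb]
        rw [mul_mul_mul_comm, Complex.mul_conj]
        push_cast
        rw [Complex.normSq_eq_norm_sq]
        push_cast
        ring
      rw [hqC, hqS, ← Complex.ofReal_sub, Complex.zero_le_real]
      have hcs : ‖⟪a, b⟫_ℂ‖ ≤ ‖a‖ * ‖b‖ := norm_inner_le_norm a b
      have hga : γ * ‖a‖ = 1 := inv_mul_cancel₀ (ne_of_gt hna)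
      have key : γ^2 * ‖⟪a, b⟫_ℂ‖^2 ≤ γ^2 * (‖a‖ * ‖b‖)^2 := by
        have := pow_le_pow_left₀ (norm_nonneg (⟪a, b⟫_ℂ : ℂ)) hcs 2
        nlinarith [sq_nonneg γ]
      have key2 : γ^2 * (‖a‖ * ‖b‖)^2 = ‖b‖^2 := by
        have : (γ * ‖a‖)^2 = 1 := by rw [hga]; norm_num
        nlinarith [this]
      linarith

/-- Vectorization of a rectangular matrix. -/
def vecOf (L : Matrix (Fin d₁) (Fin d₂) ℂ) : Fin d₁ × Fin d₂ → ℂ := fun x => L x.1 x.2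

lemma choi_eq_vecMulVec_iff (φ : Matrix (Fin d₁) (Fin d₁) ℂ →ₗ[ℂ] Matrix (Fin d₂) (Fin d₂) ℂ)
    (L : Matrix (Fin d₁) (Fin d₂) ℂ) :
    choi φ = vecMulVec (star (vecOf L)) (vecOf L) ↔
      ∀ X, φ X = Lᴴ * X * L := by
  have hmul : ∀ (X : Matrix (Fin d₁) (Fin d₁) ℂ) a b,
      (Lᴴ * X * L) a b = ∑ i, ∑ j, star (L i a) * X i j * L j b := by
    intro X a b
    simp only [Matrix.mul_apply, conjTranspose_apply, Finset.sum_mul]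
    rw [Finset.sum_comm]
  constructor
  · intro h X
    have hφ : φ = toMap (vecMulVec (star (vecOf L)) (vecOf L)) := by rw [← h, toMap_choi]
    ext a b
    rw [hφ, hmul]
    show ∑ i, ∑ j, X i j * vecMulVec (star (vecOf L)) (vecOf L) (i, a) (j, b) = _
    refine Finset.sum_congr rfl fun i _ => Finset.sum_congr rfl fun j _ => ?_
    simp only [vecMulVec_apply, Pi.star_apply, vecOf]
    ring
  · intro h
    ext ⟨i, a⟩ ⟨j, b⟩
    show φ (Matrix.single i j 1) a b = _
    rw [h, hmul]
    simp [Matrix.single, ite_and, vecMulVec_apply, vecOf, Finset.sum_ite_eq, mul_ite, ite_mul]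

end PureCPAux

open PureCPAux Matrix in
/-- **Theorem.** A non-zero completely positive map `φ : M_{d₁}(ℂ) → M_{d₂}(ℂ)` is pure
if and only if `φ(X) = L* X L` for some non-zero `d₁ × d₂` complex matrix `L`. -/
theorem isPureCP_iff_single_kraus
    {d₁ d₂ : ℕ}
    (φ : Matrix (Fin d₁) (Fin d₁) ℂ →ₗ[ℂ] Matrix (Fin d₂) (Fin d₂) ℂ)
    (hφ0 : φ ≠ 0) (hφ : IsCPMap φ) :
    IsPureCP φ ↔
      ∃ L : Matrix (Fin d₁) (Fin d₂) ℂ, L ≠ 0 ∧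
        ∀ X, φ X = L.conjTranspose * X * L := by
  constructor
  · intro hpure
    have hC : (choi φ).PosSemidef := choi_posSemidef hφ
    have hC0 : choi φ ≠ 0 := fun h => hφ0 (choi_inj (h.trans (by ext ⟨i,a⟩ ⟨j,b⟩; simp [choi])))
    obtain ⟨S, hS0, ⟨w, hw⟩, hSpsd, hCS⟩ := exists_rankOne_le hC hC0
    set ψ := toMap S with hψ
    have hψchoi : choi ψ = S := choi_toMap S
    have hψcp : IsCPMap ψ := isCPMap_of_choi (by rw [hψchoi]; exact hSpsd)
    have hφψcp : IsCPMap (φ - ψ) := isCPMap_of_choi (by rw [choi_sub, hψchoi]; exact hCS)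
    obtain ⟨t, ht0, ht1, hts⟩ := hpure ψ hψcp hφψcp
    have htS : S = (t : ℂ) • choi φ := by rw [← hψchoi, hts, choi_smul]
    have ht0' : t ≠ 0 := by
      rintro rfl
      simp only [Complex.ofReal_zero, zero_smul] at htS
      exact hS0 htS
    set c : ℂ := ((Real.sqrt t : ℝ) : ℂ)⁻¹ with hc
    set v : Fin d₁ × Fin d₂ → ℂ := fun x => c * w x with hv
    have hcc : c * c = (t : ℂ)⁻¹ := by
      rw [hc, ← mul_inv, ← Complex.ofReal_mul, Real.mul_self_sqrt ht0]
    have hcstar : star c = c := by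
      rw [hc, ← Complex.ofReal_inv]
      exact Complex.conj_ofReal _
    have hchoiφ : choi φ = vecMulVec (star v) v := by
      have h1 : choi φ = (t : ℂ)⁻¹ • S := by
        rw [htS, smul_smul, inv_mul_cancel₀ (by exact_mod_cast ht0'), one_smul]
      rw [h1, hw]
      ext x y
      simp only [vecMulVec_apply, Matrix.smul_apply, Pi.star_apply, hv, star_mul', hcstar,
        smul_eq_mul, ← hcc]
      ring
    have hv0 : v ≠ 0 := by
      intro h0
      apply hC0
      rw [hchoiφ, h0]
      ext x y
      simp [vecMulVec_apply]
    set L : Matrix (Fin d₁) (Fin d₂) ℂ := Matrix.of fun i a => v (i, a) with hL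
    have hvecOf : vecOf L = v := rfl
    refine ⟨L, ?_, (choi_eq_vecMulVec_iff φ L).mp (by rw [hvecOf]; exact hchoiφ)⟩
    intro h0
    apply hv0
    funext x
    have := congrFun (congrFun h0 x.1) x.2
    simpa [hL] using this
  · rintro ⟨L, hL0, hL⟩ ψ hψcp hφψcp
    have hchoiφ : choi φ = vecMulVec (star (vecOf L)) (vecOf L) :=
      (choi_eq_vecMulVec_iff φ L).mpr hL
    have hSpsd : (choi ψ).PosSemidef := choi_posSemidef hψcp
    have hdiff : (vecMulVec (star (vecOf L)) (vecOf L) - choi ψ).PosSemidef := by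
      rw [← hchoiφ, ← choi_sub]
      exact choi_posSemidef hφψcp
    obtain ⟨t, ht0, ht1, hts⟩ := psd_le_rankOne _ _ hSpsd hdiff
    exact ⟨t, ht0, ht1, choi_inj (by rw [choi_smul, hchoiφ, hts])⟩
end
end

section
/- Let A be a C*-algebra and B a C*-algebra with B ⊆ B(H) for some Hilbert space H; fix a projection R ∈ B, and let β : A → B·R be a linear map. If β is CP completable, then: (i) the map X ↦ Rβ(X) is completely positive; (ii) there exists q ≥ 0 such that β(X)*(1 − R)β(X) ≤ q‖X‖·Rβ(X) for every positive element X of A; (iii) for every n ≥ 1 and every positive matrix X = [X_{ij}] in M_n(A), the matrix [β(X_{ij})] ∈ M_n(B·R) admits a positive completion in M_n(B), i.e. there exists a positive element Y = [Y_{ij}] of M_n(B) with Y_{ij}R = β(X_{ij}) for all i, j. -/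
noncomputable section

set_option maxHeartbeats 2000000
set_option synthInstance.maxHeartbeats 400000

open Matrix
open scoped ComplexOrder

namespace CPAux

open ContinuousLinearMap Matrix

variable {H : Type} [NormedAddCommGroup H] [InnerProductSpace ℂ H] [CompleteSpace H] {n : ℕ}

/-- The Hilbert space `H ⊕ ⋯ ⊕ H` (`n` copies). -/
abbrev K (H : Type) [NormedAddCommGroup H] (n : ℕ) : Type := PiLp 2 (fun _ : Fin n => H)

instance [CompleteSpace H] : CompleteSpace (K H n) :=
  inferInstanceAs (CompleteSpace (PiLp 2 (fun _ : Fin n => H)))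

variable (H n) in
/-- Identification of `K H n` with plain functions. -/
def eK : K H n ≃L[ℂ] (Fin n → H) := PiLp.continuousLinearEquiv 2 ℂ _

@[simp] lemma eK_apply (v : K H n) (i : Fin n) : eK H n v i = v i := rfl

@[simp] lemma eK_symm_apply (v : Fin n → H) (i : Fin n) :
    ((eK H n).symm v : K H n) i = v i := rfl

/-- Interpret a matrix of operators as an operator on `K H n`. -/
def toCLM (M : Matrix (Fin n) (Fin n) (H →L[ℂ] H)) : K H n →L[ℂ] K H n :=
  ((eK H n).symm.toContinuousLinearMap.comp
    (ContinuousLinearMap.pi fun i => ∑ j, (M i j).comp (ContinuousLinearMap.proj j))).comp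
    (eK H n).toContinuousLinearMap

lemma toCLM_apply (M : Matrix (Fin n) (Fin n) (H →L[ℂ] H)) (v : K H n) (i : Fin n) :
    toCLM M v i = ∑ j, M i j (v j) := by
  show ((eK H n).symm ((ContinuousLinearMap.pi
      fun i => ∑ j, (M i j).comp (ContinuousLinearMap.proj j)) (eK H n v))) i = _
  rw [eK_symm_apply, ContinuousLinearMap.pi_apply, ContinuousLinearMap.sum_apply]
  simp

/-- The `j`-th coordinate inclusion `H →L K H n`. -/
def iotaK (j : Fin n) : H →L[ℂ] K H n :=
  (eK H n).symm.toContinuousLinearMap.comp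
    (ContinuousLinearMap.pi (Pi.single j (ContinuousLinearMap.id ℂ H)))

lemma iotaK_apply (j : Fin n) (x : H) (k : Fin n) :
    iotaK j x k = if k = j then x else 0 := by
  show ((eK H n).symm ((ContinuousLinearMap.pi
      (Pi.single j (ContinuousLinearMap.id ℂ H))) x)) k = _
  rw [eK_symm_apply, ContinuousLinearMap.pi_apply]
  rcases eq_or_ne k j with rfl | h
  · simp
  · simp [Pi.single_eq_of_ne h, h]

/-- The `i`-th coordinate projection `K H n →L H`. -/
def projK (i : Fin n) : K H n →L[ℂ] H :=
  (ContinuousLinearMap.proj i).comp (eK H n).toContinuousLinearMap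

/-- The `(i,j)` matrix entry of an operator on `K H n`, as a continuous linear map. -/
def EntL (i j : Fin n) : (K H n →L[ℂ] K H n) →L[ℂ] (H →L[ℂ] H) :=
  (ContinuousLinearMap.compL ℂ H (K H n) H (projK i)).comp
    ((ContinuousLinearMap.compL ℂ H (K H n) (K H n)).flip (iotaK j))

lemma EntL_apply (i j : Fin n) (T : K H n →L[ℂ] K H n) (x : H) :
    EntL i j T x = T (iotaK j x) i := by
  simp [EntL, projK, ContinuousLinearMap.flip_apply, ContinuousLinearMap.compL_apply]

lemma EntL_toCLM (M : Matrix (Fin n) (Fin n) (H →L[ℂ] H)) (i j : Fin n) :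
    EntL i j (toCLM M) = M i j := by
  ext x
  rw [EntL_apply, toCLM_apply]
  rw [Finset.sum_eq_single_of_mem j (Finset.mem_univ j)
    (fun k _ hk => by rw [iotaK_apply, if_neg hk, map_zero])]
  rw [iotaK_apply, if_pos rfl]

lemma sum_iotaK (v : K H n) : ∑ j, iotaK j (v j) = v := by
  apply (eK H n).injective
  funext k
  rw [map_sum]
  rw [Finset.sum_apply]
  simp only [eK_apply, iotaK_apply]
  simp

lemma toCLM_EntL (T : K H n →L[ℂ] K H n) :
    toCLM (Matrix.of fun i j => EntL i j T) = T := by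
  refine ContinuousLinearMap.ext fun v => ?_
  apply (eK H n).injective
  funext i
  simp only [eK_apply]
  rw [toCLM_apply]
  simp only [Matrix.of_apply, EntL_apply]
  calc ∑ j, T (iotaK j (v j)) i = (∑ j, T (iotaK j (v j)) : K H n) i := by
        rw [← eK_apply (∑ j, T (iotaK j (v j)))]
        rw [map_sum, Finset.sum_apply]
        rfl
    _ = T v i := by rw [← map_sum, sum_iotaK]

lemma toCLM_mul (M M' : Matrix (Fin n) (Fin n) (H →L[ℂ] H)) :
    toCLM (M * M') = toCLM M * toCLM M' := by
  refine ContinuousLinearMap.ext fun v => ?_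
  apply (eK H n).injective
  funext i
  simp only [eK_apply, ContinuousLinearMap.mul_apply]
  rw [toCLM_apply, toCLM_apply]
  have : ∀ k, M i k ((toCLM M' v) k) = ∑ j, M i k (M' k j (v j)) := fun k => by
    rw [toCLM_apply, map_sum]
  simp only [this, Matrix.mul_apply, ContinuousLinearMap.sum_apply,
    ContinuousLinearMap.mul_apply]
  exact Finset.sum_comm

lemma toCLM_conjTranspose (M : Matrix (Fin n) (Fin n) (H →L[ℂ] H)) :
    toCLM Mᴴ = star (toCLM M) := by
  rw [ContinuousLinearMap.star_eq_adjoint]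
  refine (ContinuousLinearMap.eq_adjoint_iff _ _).mpr fun x y => ?_
  rw [PiLp.inner_apply, PiLp.inner_apply]
  have hl : ∀ i, (inner ℂ ((toCLM Mᴴ x) i) (y i) : ℂ)
      = ∑ j, inner ℂ (x j) (M j i (y i)) := fun i => by
    rw [toCLM_apply, sum_inner]
    refine Finset.sum_congr rfl fun j _ => ?_
    rw [Matrix.conjTranspose_apply, ContinuousLinearMap.star_eq_adjoint,
      ContinuousLinearMap.adjoint_inner_left]
  have hr : ∀ j, (inner ℂ (x j) ((toCLM M y) j) : ℂ)
      = ∑ i, inner ℂ (x j) (M j i (y i)) := fun j => by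
    rw [toCLM_apply, inner_sum]
  simp only [hl, hr]
  exact Finset.sum_comm

lemma EntL_star (i j : Fin n) (T : K H n →L[ℂ] K H n) :
    EntL i j (star T) = star (EntL j i T) := by
  conv_lhs => rw [← toCLM_EntL T, ← toCLM_conjTranspose, EntL_toCLM]
  simp [Matrix.conjTranspose_apply]

lemma EntL_mul (i j : Fin n) (T T' : K H n →L[ℂ] K H n) :
    EntL i j (T * T') = ∑ k, EntL i k T * EntL k j T' := by
  conv_lhs => rw [← toCLM_EntL T, ← toCLM_EntL T', ← toCLM_mul, EntL_toCLM]
  simp [Matrix.mul_apply]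

end CPAux

/-- **Theorem (necessary conditions for CP completability).** Let `A` be a C*-algebra,
`B ⊆ B(H)` a C*-subalgebra, `R ∈ B` a projection and `β : A → B·R` a linear map. If `β`
is CP completable (`β(X) = φ(X)R` for some completely positive `φ : A → B`), then:
(i) `X ↦ R β(X)` is completely positive;
(ii) there is `q ≥ 0` with `β(X)* (1 - R) β(X) ≤ q ‖X‖ · R β(X)` for all positive `X`;
(iii) for every positive `[Xᵢⱼ] ∈ M_n(A)`, the matrix `[β(Xᵢⱼ)]` admits a positive
completion in `M_n(B)`. -/
theorem cp_completable_necessary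
    (A : Type*) [NormedRing A] [StarRing A] [CStarRing A] [NormedAlgebra ℂ A]
    [CompleteSpace A] [StarModule ℂ A]
    (H : Type) [NormedAddCommGroup H] [InnerProductSpace ℂ H] [CompleteSpace H]
    (S : StarSubalgebra ℂ (H →L[ℂ] H)) (hS : IsClosed (S : Set (H →L[ℂ] H)))
    (R : H →L[ℂ] H) (hRsa : IsSelfAdjoint R) (hRidem : R * R = R) (hRmem : R ∈ S)
    (β : A →ₗ[ℂ] (H →L[ℂ] H)) (hβ : ∀ X, ∃ Y ∈ S, β X = Y * R)
    (hcompletable : ∃ φ : A →ₗ[ℂ] (H →L[ℂ] H),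
      IsCPMap φ ∧ (∀ X, φ X ∈ S) ∧ ∀ X, β X = φ X * R) :
    IsCPMap ((LinearMap.mulLeft ℂ R).comp β) ∧
    (∃ q : ℝ, 0 ≤ q ∧ ∀ X : A, (∃ y, X = star y * y) →
      ((q * ‖X‖) • (R * β X) - star (β X) * (1 - R) * β X).IsPositive) ∧
    (∀ (n : ℕ) (M : Matrix (Fin n) (Fin n) A),
      (∃ N : Matrix (Fin n) (Fin n) A, M = N.conjTranspose * N) →
      ∃ Y : Matrix (Fin n) (Fin n) (H →L[ℂ] H),
        (∀ i j, Y i j ∈ S) ∧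
        (∃ Z : Matrix (Fin n) (Fin n) (H →L[ℂ] H),
          (∀ i j, Z i j ∈ S) ∧ Y = Z.conjTranspose * Z) ∧
        ∀ i j, Y i j * R = β (M i j)) := by
  classical
  obtain ⟨φ, hφCP, hφS, hφR⟩ := hcompletable
  letI : CStarAlgebra A := { }
  letI : PartialOrder A := CStarAlgebra.spectralOrder A
  letI : StarOrderedRing A := CStarAlgebra.spectralOrderedRing A
  -- φ maps "positive" elements to elements of the form `star p * p`.
  have hφrep : ∀ X : A, (∃ y, X = star y * y) → ∃ p : H →L[ℂ] H, φ X = star p * p := by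
    rintro X ⟨y, rfl⟩
    obtain ⟨P, hP⟩ := hφCP 1 (Matrix.of fun _ _ => star y * y)
      ⟨(Matrix.of fun _ _ => y), by
        ext i j
        simp [Matrix.mul_apply, Matrix.conjTranspose_apply]⟩
    refine ⟨P 0 0, ?_⟩
    have h00 := congrFun (congrFun hP 0) 0
    simpa [Matrix.map_apply, Matrix.mul_apply, Matrix.conjTranspose_apply,
      Fin.sum_univ_one] using h00
  have hφpos : ∀ X : A, (∃ y, X = star y * y) → (0 : H →L[ℂ] H) ≤ φ X := by
    intro X hX
    obtain ⟨p, hp⟩ := hφrep X hX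
    rw [hp]
    exact star_mul_self_nonneg p
  -- positivity of positive elements of A
  have hpos : ∀ X : A, (∃ y, X = star y * y) → 0 ≤ X := by
    rintro X ⟨y, rfl⟩; exact star_mul_self_nonneg y
  have hsa' : ∀ X : A, (∃ y, X = star y * y) → IsSelfAdjoint X := by
    rintro X ⟨y, rfl⟩; exact IsSelfAdjoint.star_mul_self y
  -- nonnegative elements of A are of the required form
  have hrep_of_nonneg : ∀ Z : A, 0 ≤ Z → ∃ z, Z = star z * z := by
    intro Z hZ
    refine ⟨CFC.sqrt Z, ?_⟩
    rw [(IsSelfAdjoint.of_nonneg (CFC.sqrt_nonneg _)).star_eq,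
      CFC.sqrt_mul_sqrt_self Z hZ]
  -- norm bound : ‖φ X‖ ≤ ‖φ 1‖ * ‖X‖ for positive X
  have hq : ∀ X : A, (∃ y, X = star y * y) → ‖φ X‖ ≤ ‖φ 1‖ * ‖X‖ := by
    intro X hX
    have hX0 := hpos X hX
    have hXsa := hsa' X hX
    have h1 : X ≤ algebraMap ℝ A ‖X‖ := hXsa.le_algebraMap_norm_self
    have h2 : 0 ≤ algebraMap ℝ A ‖X‖ - X := sub_nonneg.2 h1
    have h4 : (0 : H →L[ℂ] H) ≤ φ (algebraMap ℝ A ‖X‖ - X) :=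
      hφpos _ (hrep_of_nonneg _ h2)
    have h5 : φ (algebraMap ℝ A ‖X‖ - X) = ‖X‖ • φ 1 - φ X := by
      rw [map_sub, Algebra.algebraMap_eq_smul_one, LinearMap.map_smul_of_tower]
    rw [h5, sub_nonneg] at h4
    have h7 : ‖φ X‖ ≤ ‖(‖X‖ • φ 1 : H →L[ℂ] H)‖ :=
      CStarAlgebra.norm_le_norm_of_nonneg_of_le (hφpos X hX) h4
    calc ‖φ X‖ ≤ ‖(‖X‖ • φ 1 : H →L[ℂ] H)‖ := h7
      _ = ‖X‖ * ‖φ 1‖ := by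
          rw [norm_smul, Real.norm_of_nonneg (norm_nonneg X)]
      _ = ‖φ 1‖ * ‖X‖ := mul_comm _ _
  refine ⟨?_, ?_, ?_⟩
  · -- (i) complete positivity of X ↦ R β X
    intro n M hM
    obtain ⟨P, hP⟩ := hφCP n M hM
    refine ⟨P * Matrix.diagonal (fun _ => R), ?_⟩
    have hQ : (P * Matrix.diagonal (fun _ => R))ᴴ * (P * Matrix.diagonal (fun _ => R))
        = Matrix.diagonal (fun _ => R) * (Pᴴ * P) * Matrix.diagonal (fun _ => R) := by
      rw [Matrix.conjTranspose_mul, Matrix.diagonal_conjTranspose]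
      have hstarR : (star fun _ : Fin n => R) = fun _ : Fin n => R := by
        funext _; simp [hRsa.star_eq]
      rw [hstarR]
      noncomm_ring
    rw [hQ, ← hP]
    ext i j
    rw [Matrix.mul_diagonal, Matrix.diagonal_mul]
    simp only [Matrix.map_apply, LinearMap.coe_comp, Function.comp_apply,
      LinearMap.mulLeft_apply]
    rw [hφR (M i j)]
    noncomm_ring
  · -- (ii) the operator inequality
    refine ⟨‖φ 1‖, norm_nonneg _, fun X hX => ?_⟩
    set T := φ X with hTdef
    have hT0 : (0 : H →L[ℂ] H) ≤ T := hφpos X hX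
    have hTsa : IsSelfAdjoint T := .of_nonneg hT0
    have hR0 : (0 : H →L[ℂ] H) ≤ R := by
      have h := star_mul_self_nonneg R
      rwa [hRsa.star_eq, hRidem] at h
    set c := ‖φ 1‖ * ‖X‖ with hcdef
    have hTc : ‖T‖ ≤ c := hq X hX
    rw [← ContinuousLinearMap.nonneg_iff_isPositive, sub_nonneg]
    have hβX : β X = T * R := hφR X
    have hstarβ : star (β X) = R * T := by
      rw [hβX, StarMul.star_mul, hRsa.star_eq, hTsa.star_eq]
    -- T * T ≤ c • T
    have hTT : T * T ≤ c • T := by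
      have hle2 : algebraMap ℝ (H →L[ℂ] H) ‖T‖ ≤ algebraMap ℝ (H →L[ℂ] H) c := by
        have hw : star (Real.sqrt (c - ‖T‖) • (1 : H →L[ℂ] H))
            * (Real.sqrt (c - ‖T‖) • (1 : H →L[ℂ] H))
            = algebraMap ℝ (H →L[ℂ] H) c - algebraMap ℝ (H →L[ℂ] H) ‖T‖ := by
          rw [star_smul, star_one, star_trivial, smul_mul_smul_comm, one_mul,
            Real.mul_self_sqrt (sub_nonneg.2 hTc), Algebra.algebraMap_eq_smul_one,
            Algebra.algebraMap_eq_smul_one, ← sub_smul]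
        exact sub_nonneg.1 (hw ▸ star_mul_self_nonneg _)
      have h5' : T ≤ algebraMap ℝ (H →L[ℂ] H) c :=
        hTsa.le_algebraMap_norm_self.trans hle2
      have hconj := star_left_conjugate_le_conjugate h5' (CFC.sqrt T)
      set s := CFC.sqrt T with hsdef
      have hsq : s * s = T := CFC.sqrt_mul_sqrt_self T hT0
      have hssa : star s = s := (IsSelfAdjoint.of_nonneg (CFC.sqrt_nonneg _)).star_eq
      rw [hssa] at hconj
      calc T * T = s * T * s := by rw [← hsq]; simp only [mul_assoc]
        _ ≤ s * algebraMap ℝ (H →L[ℂ] H) c * s := hconj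
        _ = c • T := by
            rw [Algebra.algebraMap_eq_smul_one, mul_smul_comm, mul_one,
              smul_mul_assoc, hsq]
    have h1 : star (β X) * (1 - R) * β X ≤ star (β X) * 1 * β X :=
      star_left_conjugate_le_conjugate (sub_le_self 1 hR0) (β X)
    have h2 : star (β X) * 1 * β X = R * (T * T) * R := by
      rw [hstarβ, hβX, mul_one]
      noncomm_ring
    have h3 : R * (T * T) * R ≤ R * (c • T) * R := by
      have h := star_left_conjugate_le_conjugate hTT R
      rwa [hRsa.star_eq] at h
    have h4 : R * (c • T) * R = c • (R * β X) := by
      simp only [hβX, mul_smul_comm, smul_mul_assoc, mul_assoc]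
    exact (h1.trans_eq h2).trans (h3.trans_eq h4)
  · -- (iii) positive completion
    intro n M hM
    obtain ⟨P, hP⟩ := hφCP n M hM
    set T₀ := CPAux.toCLM (M.map ⇑φ) with hT₀def
    have hT₀fact : T₀ = star (CPAux.toCLM P) * CPAux.toCLM P := by
      rw [hT₀def, hP, CPAux.toCLM_mul, CPAux.toCLM_conjTranspose]
    have hT₀0 : 0 ≤ T₀ := hT₀fact ▸ star_mul_self_nonneg _
    have hT₀sa : IsSelfAdjoint T₀ := .of_nonneg hT₀0
    -- the set of operators with all entries in S
    set CS : Set (CPAux.K H n →L[ℂ] CPAux.K H n) :=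
      {T | ∀ i j, CPAux.EntL i j T ∈ S} with hCSdef
    have hCSclosed : IsClosed CS := by
      have : CS = ⋂ i, ⋂ j, (CPAux.EntL i j) ⁻¹' (S : Set (H →L[ℂ] H)) := by
        ext T; simp [hCSdef, Set.mem_iInter]
      rw [this]
      exact isClosed_iInter fun i => isClosed_iInter fun j =>
        hS.preimage (CPAux.EntL i j).continuous
    have hCS0 : (0 : CPAux.K H n →L[ℂ] CPAux.K H n) ∈ CS := by
      intro i j; rw [map_zero]; exact zero_mem S
    have hCSadd : ∀ T T', T ∈ CS → T' ∈ CS → T + T' ∈ CS := by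
      intro T T' hT hT' i j; rw [map_add]; exact add_mem (hT i j) (hT' i j)
    have hCSsmul : ∀ (r : ℝ) T, T ∈ CS → r • T ∈ CS := by
      intro r T hT i j
      rw [ContinuousLinearMap.map_smul_of_tower, ← algebraMap_smul ℂ r (CPAux.EntL i j T)]
      exact S.smul_mem (hT i j) _
    have hCSmul : ∀ T T', T ∈ CS → T' ∈ CS → T * T' ∈ CS := by
      intro T T' hT hT' i j
      rw [CPAux.EntL_mul]
      exact sum_mem fun k _ => mul_mem (hT i k) (hT' k j)
    have hCSstar : ∀ T, T ∈ CS → star T ∈ CS := by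
      intro T hT i j
      rw [CPAux.EntL_star]
      exact star_mem (hT j i)
    have hT₀mem : T₀ ∈ CS := by
      intro i j
      rw [hT₀def, CPAux.EntL_toCLM, Matrix.map_apply]
      exact hφS _
    -- every cfcₙHom image lies in CS
    have h0 : ((0 : quasispectrum ℝ T₀) : ℝ) = 0 := rfl
    haveI : Fact (0 ∈ quasispectrum ℝ T₀) := ⟨quasispectrum.zero_mem ℝ T₀⟩
    have key : ∀ f : ContinuousMapZero (quasispectrum ℝ T₀) ℝ, cfcₙHom hT₀sa f ∈ CS := by
      intro f
      have hf : f ∈ closure ((NonUnitalStarAlgebra.adjoin ℝ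
          {(ContinuousMapZero.id (quasispectrum ℝ T₀))} :
          NonUnitalStarSubalgebra ℝ (ContinuousMapZero (quasispectrum ℝ T₀) ℝ)) :
          Set (ContinuousMapZero (quasispectrum ℝ T₀) ℝ)) := by
        rw [(ContinuousMapZero.adjoin_id_dense (quasispectrum ℝ T₀)).closure_eq]
        trivial
      have hidmem : cfcₙHom hT₀sa (ContinuousMapZero.id (quasispectrum ℝ T₀)) ∈ CS := by
        have hid : cfcₙHom hT₀sa (ContinuousMapZero.id (quasispectrum ℝ T₀)) = T₀ := cfcₙHom_id hT₀sa
        rw [hid]; exact hT₀mem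
      have hsub : ((NonUnitalStarAlgebra.adjoin ℝ {(ContinuousMapZero.id (quasispectrum ℝ T₀))} :
          NonUnitalStarSubalgebra ℝ (ContinuousMapZero (quasispectrum ℝ T₀) ℝ)) :
          Set (ContinuousMapZero (quasispectrum ℝ T₀) ℝ))
          ⊆ {g | cfcₙHom hT₀sa g ∈ CS} := by
        intro g hg
        induction hg using NonUnitalStarAlgebra.adjoin_induction with
        | mem g hg =>
            obtain rfl : g = ContinuousMapZero.id (quasispectrum ℝ T₀) := by simpa using hg
            exact hidmem
        | add x y hx hy ihx ihy => rw [Set.mem_setOf_eq, _root_.map_add]; exact hCSadd _ _ ihx ihy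
        | zero => rw [Set.mem_setOf_eq, _root_.map_zero]; exact hCS0
        | mul x y hx hy ihx ihy => rw [Set.mem_setOf_eq, _root_.map_mul]; exact hCSmul _ _ ihx ihy
        | smul r x hx ihx => rw [Set.mem_setOf_eq, _root_.map_smul]; exact hCSsmul _ _ ihx
        | star x hx ihx => rw [Set.mem_setOf_eq, StarHomClass.map_star]; exact hCSstar _ ihx
      have hclosed' : IsClosed {g | cfcₙHom hT₀sa g ∈ CS} :=
        hCSclosed.preimage (cfcₙHom_isClosedEmbedding (R := ℝ) hT₀sa).continuous
      exact closure_minimal hsub hclosed' hf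
    -- the square root of T₀
    set Z₀ := cfcₙ Real.sqrt T₀ with hZ₀def
    have hZmem : Z₀ ∈ CS := by
      rw [hZ₀def, cfcₙ_apply Real.sqrt T₀ (Real.continuous_sqrt.continuousOn)
        Real.sqrt_zero hT₀sa]
      exact key _
    have hZsa : IsSelfAdjoint Z₀ := by
      rw [hZ₀def, cfcₙ_apply Real.sqrt T₀ (Real.continuous_sqrt.continuousOn)
        Real.sqrt_zero hT₀sa]
      exact cfcₙHom_predicate hT₀sa _
    have hZZ : Z₀ * Z₀ = T₀ := by
      rw [hZ₀def, ← cfcₙ_mul Real.sqrt Real.sqrt T₀ (Real.continuous_sqrt.continuousOn)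
        Real.sqrt_zero (Real.continuous_sqrt.continuousOn) Real.sqrt_zero]
      have heq : (quasispectrum ℝ T₀).EqOn (fun x => Real.sqrt x * Real.sqrt x)
          (id : ℝ → ℝ) := fun x hx =>
        Real.mul_self_sqrt (quasispectrum_nonneg_of_nonneg T₀ hT₀0 x hx)
      rw [cfcₙ_congr heq, cfcₙ_id ℝ T₀]
    -- assemble
    refine ⟨Matrix.of fun i j => φ (M i j), fun i j => hφS _,
      ⟨Matrix.of fun i j => CPAux.EntL i j Z₀, fun i j => hZmem i j, ?_⟩,
      fun i j => by simpa using (hφR (M i j)).symm⟩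
    apply Matrix.ext
    intro i j
    simp only [Matrix.of_apply, Matrix.mul_apply, Matrix.conjTranspose_apply]
    calc φ (M i j) = CPAux.EntL i j (Z₀ * Z₀) := by
          rw [hZZ, hT₀def, CPAux.EntL_toCLM, Matrix.map_apply]
      _ = ∑ k, CPAux.EntL i k Z₀ * CPAux.EntL k j Z₀ := CPAux.EntL_mul i j Z₀ Z₀
      _ = ∑ k, star (CPAux.EntL k i Z₀) * CPAux.EntL k j Z₀ := by
          refine Finset.sum_congr rfl fun k _ => ?_
          rw [← CPAux.EntL_star, hZsa.star_eq]
end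
end

section
/- Let A be a unital C*-algebra, H a Hilbert space, and let φ, ψ : A → B(H) be completely positive maps with φ quasi-pure and φ(I) = ψ(I). Suppose R ∈ B(H) satisfies φ(X)R = ψ(X)R for all X ∈ A, and suppose there exists X₀ ∈ A with φ(X₀)R ≠ 0. Then φ = ψ. -/
noncomputable section

open scoped ComplexOrder

open scoped InnerProductSpace

lemma gram_of_cp {A : Type*} [Ring A] [StarRing A] [Module ℂ A]
    {H : Type} [NormedAddCommGroup H] [InnerProductSpace ℂ H] [CompleteSpace H]
    {ψ : A →ₗ[ℂ] (H →L[ℂ] H)} (hψ : IsCPMap ψ) (n : ℕ)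
    (X : Fin (n + 1) → A) (u : Fin (n + 1) → H) :
    ∃ v : Fin (n + 1) → PiLp 2 (fun _ : Fin (n + 1) => H),
      ∀ i j, ⟪v i, v j⟫_ℂ = ⟪u i, ψ (star (X i) * X j) (u j)⟫_ℂ := by
  obtain ⟨P, hP⟩ := hψ (n + 1) (Matrix.of fun i j => star (X i) * X j)
    ⟨Matrix.of fun i j => if i = 0 then X j else 0, by
      ext i j
      simp [Matrix.mul_apply, Matrix.conjTranspose_apply, apply_ite, ite_mul, mul_ite]⟩
  have hPij : ∀ i j, ψ (star (X i) * X j) = (P.conjTranspose * P) i j := by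
    intro i j
    have := congrFun (congrFun hP i) j
    simpa [Matrix.map_apply] using this
  refine ⟨fun i => (WithLp.equiv 2 _).symm fun k => P k i (u i), fun i j => ?_⟩
  rw [PiLp.inner_apply, hPij i j, Matrix.mul_apply, ContinuousLinearMap.coe_sum',
    Finset.sum_apply, inner_sum]
  refine Finset.sum_congr rfl fun k _ => ?_
  simp only [WithLp.equiv_symm_apply, WithLp.ofLp_toLp, Matrix.conjTranspose_apply,
    ContinuousLinearMap.mul_apply, ContinuousLinearMap.star_eq_adjoint,
    ContinuousLinearMap.adjoint_inner_right]

/-- **Theorem (rigidity of quasi-pure maps).** Let `A` be a unital C*-algebra, `H` a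
Hilbert space, and `φ, ψ : A → B(H)` completely positive maps with `φ` quasi-pure and
`φ(I) = ψ(I)`. If `R ∈ B(H)` satisfies `φ(X)R = ψ(X)R` for all `X`, and `φ(X₀)R ≠ 0`
for some `X₀`, then `φ = ψ`. -/
theorem quasiPure_R_equiv_rigidity
    (A : Type*) [NormedRing A] [StarRing A] [CStarRing A] [NormedAlgebra ℂ A]
    [CompleteSpace A] [StarModule ℂ A]
    (H : Type) [NormedAddCommGroup H] [InnerProductSpace ℂ H] [CompleteSpace H]
    (φ ψ : A →ₗ[ℂ] (H →L[ℂ] H)) (hφ : IsCPMap φ) (hψ : IsCPMap ψ)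
    (hqp : IsQuasiPure φ) (hunit : φ 1 = ψ 1)
    (R : H →L[ℂ] H) (hR : ∀ X, φ X * R = ψ X * R)
    (hX₀ : ∃ X₀, φ X₀ * R ≠ 0) :
    φ = ψ := by
  obtain ⟨K, π, V, hrep, -, hcyc⟩ := hqp
  obtain ⟨X₀, hX0⟩ := hX₀
  -- a vector r in the range of R with φ X₀ r ≠ 0
  have hex : ∃ h₀ : H, (φ X₀) (R h₀) ≠ 0 := by
    by_contra hcon
    push_neg at hcon
    exact hX0 (ContinuousLinearMap.ext fun h => by simpa using hcon h)
  obtain ⟨h₀, hh₀⟩ := hex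
  set r : H := R h₀ with hrdef
  -- ψ agrees with φ at r
  have hψφr : ∀ Z : A, (ψ Z) r = (φ Z) r := by
    intro Z
    have := congrArg (fun T : H →L[ℂ] H => T h₀) (hR Z)
    simpa using this.symm
  -- the inner product formula for φ
  have hφinner : ∀ (Z : A) (u w : H), ⟪u, (φ Z) w⟫_ℂ = ⟪V u, π Z (V w)⟫_ℂ := by
    intro Z u w
    rw [hrep Z]
    simp [ContinuousLinearMap.adjoint_inner_right]
  -- V r ≠ 0
  have hVr : V r ≠ 0 := by
    intro h0
    apply hh₀
    have : (φ X₀) r = 0 := by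
      rw [hrep X₀]
      simp [h0]
    exact this
  -- the linear map X ↦ π X (V r)
  let L : A →ₗ[ℂ] K.carrier :=
    { toFun := fun X => π X (V r)
      map_add' := fun X Y => by simp [map_add]
      map_smul' := fun c X => by simp [map_smul] }
  have hSrange : {k : K.carrier | ∃ X : A, k = π X (V r)} = Set.range L := by
    ext k
    constructor
    · rintro ⟨X, rfl⟩; exact ⟨X, rfl⟩
    · rintro ⟨X, rfl⟩; exact ⟨X, rfl⟩
  -- every V h is a limit of vectors π Xₙ (V r)
  have hmem : ∀ h : H, V h ∈ closure (Set.range L) := by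
    intro h
    have h1 : V h ∈ (Submodule.span ℂ {k : K.carrier | ∃ X : A, k = π X (V r)}).topologicalClosure := by
      rw [hcyc r hVr]; trivial
    have h2 : (Submodule.span ℂ {k : K.carrier | ∃ X : A, k = π X (V r)} : Set K.carrier)
        = Set.range L := by
      rw [hSrange, ← LinearMap.coe_range, Submodule.span_eq]
    have h3 : V h ∈ closure ((Submodule.span ℂ {k : K.carrier | ∃ X : A, k = π X (V r)}) : Set K.carrier) := by
      rw [← Submodule.topologicalClosure_coe]
      exact h1
    rwa [h2] at h3
  -- the key pointwise-inner-product identity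
  have key : ∀ (Y : A) (h g : H), ⟪g, (φ Y) h⟫_ℂ = ⟪g, (ψ Y) h⟫_ℂ := by
    intro Y h g
    obtain ⟨seq, hseqmem, hseqlim⟩ := mem_closure_iff_seq_limit.mp (hmem h)
    choose Xs hXs using hseqmem
    have hlim : Filter.Tendsto (fun n => π (Xs n) (V r)) Filter.atTop (nhds (V h)) := by
      have : (fun n => π (Xs n) (V r)) = seq := funext fun n => hXs n
      rw [this]; exact hseqlim
    -- Limit A : ⟪g, ψ (Y * Xs n) r⟫ → ⟪g, φ Y h⟫
    have e1 : ∀ n, ⟪g, (ψ (Y * Xs n)) r⟫_ℂ = ⟪π (star Y) (V g), π (Xs n) (V r)⟫_ℂ := by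
      intro n
      rw [hψφr, hφinner, map_mul, map_star, ContinuousLinearMap.star_eq_adjoint,
        ContinuousLinearMap.adjoint_inner_left, ContinuousLinearMap.mul_apply]
    have e2 : ⟪π (star Y) (V g), V h⟫_ℂ = ⟪g, (φ Y) h⟫_ℂ := by
      rw [hφinner, map_star, ContinuousLinearMap.star_eq_adjoint,
        ContinuousLinearMap.adjoint_inner_left]
    have limA : Filter.Tendsto (fun n => ⟪g, (ψ (Y * Xs n)) r⟫_ℂ) Filter.atTop
        (nhds ⟪g, (φ Y) h⟫_ℂ) := by
      rw [← e2]
      have := Filter.Tendsto.inner (𝕜 := ℂ) (tendsto_const_nhds (x := π (star Y) (V g))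
        (f := Filter.atTop (α := ℕ))) hlim
      simpa [e1] using this
    -- Limit B : ⟪g, ψ (Y * Xs n) r⟫ → ⟪g, ψ Y h⟫, via CP Cauchy-Schwarz
    set Ca : ℝ := RCLike.re ⟪g, (ψ (Y * star Y)) g⟫_ℂ with hCa
    have hbound : ∀ n, ‖⟪g, (ψ (Y * Xs n)) r⟫_ℂ - ⟪g, (ψ Y) h⟫_ℂ‖
        ≤ Real.sqrt Ca * ‖π (Xs n) (V r) - V h‖ := by
      intro n
      obtain ⟨v, hv⟩ := gram_of_cp hψ 2 ![star Y, 1, Xs n] ![g, h, r]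
      have hv00 : ⟪v 0, v 0⟫_ℂ = ⟪g, (ψ (Y * star Y)) g⟫_ℂ := by
        simpa using hv 0 0
      have hv01 : ⟪v 0, v 1⟫_ℂ = ⟪g, (ψ Y) h⟫_ℂ := by
        simpa using hv 0 1
      have hv02 : ⟪v 0, v 2⟫_ℂ = ⟪g, (ψ (Y * Xs n)) r⟫_ℂ := by
        simpa using hv 0 2
      have hv11 : ⟪v 1, v 1⟫_ℂ = ⟪h, (ψ 1) h⟫_ℂ := by
        simpa using hv 1 1
      have hv12 : ⟪v 1, v 2⟫_ℂ = ⟪h, (ψ (Xs n)) r⟫_ℂ := by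
        simpa using hv 1 2
      have hv22 : ⟪v 2, v 2⟫_ℂ = ⟪r, (ψ (star (Xs n) * Xs n)) r⟫_ℂ := by
        simpa using hv 2 2
      -- norms of the Gram vectors in terms of K-quantities
      have hn1 : ‖v 1‖ ^ 2 = ‖V h‖ ^ 2 := by
        rw [← inner_self_eq_norm_sq (𝕜 := ℂ), hv11, ← hunit, hφinner, map_one,
          ← inner_self_eq_norm_sq (𝕜 := ℂ)]
        simp
      have hn2 : ‖v 2‖ ^ 2 = ‖π (Xs n) (V r)‖ ^ 2 := by
        rw [← inner_self_eq_norm_sq (𝕜 := ℂ), hv22, hψφr, hφinner, map_mul, map_star,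
          ContinuousLinearMap.star_eq_adjoint, ContinuousLinearMap.mul_apply,
          ContinuousLinearMap.adjoint_inner_right, ← inner_self_eq_norm_sq (𝕜 := ℂ)]
      have hre12 : RCLike.re ⟪v 2, v 1⟫_ℂ = RCLike.re ⟪π (Xs n) (V r), V h⟫_ℂ := by
        rw [inner_re_symm, hv12, hψφr, hφinner, inner_re_symm]
      have hdist : ‖v 2 - v 1‖ = ‖π (Xs n) (V r) - V h‖ := by
        have hsq : ‖v 2 - v 1‖ ^ 2 = ‖π (Xs n) (V r) - V h‖ ^ 2 := by
          rw [norm_sub_sq (𝕜 := ℂ), norm_sub_sq (𝕜 := ℂ), hn1, hn2, hre12]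
        have := congrArg Real.sqrt hsq
        rwa [Real.sqrt_sq (norm_nonneg _), Real.sqrt_sq (norm_nonneg _)] at this
      have hnv0 : ‖v 0‖ = Real.sqrt Ca := by
        have : ‖v 0‖ ^ 2 = Ca := by
          rw [← inner_self_eq_norm_sq (𝕜 := ℂ), hv00, hCa]
        rw [← this, Real.sqrt_sq (norm_nonneg _)]
      calc ‖⟪g, (ψ (Y * Xs n)) r⟫_ℂ - ⟪g, (ψ Y) h⟫_ℂ‖
          = ‖⟪v 0, v 2 - v 1⟫_ℂ‖ := by rw [inner_sub_right, hv01, hv02]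
        _ ≤ ‖v 0‖ * ‖v 2 - v 1‖ := norm_inner_le_norm _ _
        _ = Real.sqrt Ca * ‖π (Xs n) (V r) - V h‖ := by rw [hnv0, hdist]
    have limB : Filter.Tendsto (fun n => ⟪g, (ψ (Y * Xs n)) r⟫_ℂ) Filter.atTop
        (nhds ⟪g, (ψ Y) h⟫_ℂ) := by
      rw [tendsto_iff_norm_sub_tendsto_zero]
      apply squeeze_zero (fun n => norm_nonneg _) hbound
      have h0 : Filter.Tendsto (fun n => ‖π (Xs n) (V r) - V h‖) Filter.atTop (nhds 0) :=
        tendsto_iff_norm_sub_tendsto_zero.mp hlim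
      simpa using h0.const_mul (Real.sqrt Ca)
    exact tendsto_nhds_unique limA limB
  -- conclude
  refine LinearMap.ext fun Y => ContinuousLinearMap.ext fun h => ?_
  exact ext_inner_left ℂ fun g => key Y h g
end
end

section
/- Define φ : M₂(ℂ) → M₂(ℂ) by φ([[a, b], [c, d]]) = [[a + d, b + c], [b + c, a + d]], and let R = [[1, 0], [0, 0]]. Then φ is completely positive, φ is not quasi-pure, and nevertheless every completely positive map ψ : M₂(ℂ) → M₂(ℂ) satisfying φ(X)R = ψ(X)R for all X ∈ M₂(ℂ) and ψ(1) = φ(1) must equal φ. -/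
noncomputable section

open scoped ComplexOrder

namespace NotQuasiPureAux

abbrev M2 := Matrix (Fin 2) (Fin 2) ℂ

def S : M2 := Matrix.of ![![0,1],![1,0]]

lemma S_star : S.conjTranspose = S := by
  ext i j; fin_cases i <;> fin_cases j <;> simp [S]

abbrev ee (n : ℕ) : Matrix (Fin n) (Fin n) M2 ≃ₐ[ℂ] Matrix (Fin n × Fin 2) (Fin n × Fin 2) ℂ :=
  Matrix.compAlgEquiv (Fin n) (Fin 2) ℂ ℂ

lemma ee_star {n : ℕ} (M : Matrix (Fin n) (Fin n) M2) :
    ee n M.conjTranspose = (ee n M).conjTranspose := by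
  ext ⟨i,k⟩ ⟨j,l⟩
  simp [Matrix.conjTranspose_apply]

lemma part1 (φ : M2 →ₗ[ℂ] M2)
    (hS : ∀ X : M2, φ X = X + S * X * S) : IsCPMap φ := by
  intro n M h
  obtain ⟨N, rfl⟩ := h
  set D : Matrix (Fin n) (Fin n) M2 := Matrix.diagonal (fun _ => S) with hD
  have hSstar : star S = S := S_star
  have hDstar : D.conjTranspose = D := by
    rw [hD, Matrix.diagonal_conjTranspose]
    simp [Pi.star_def, hSstar]
  have key : (N.conjTranspose * N).map φ
      = N.conjTranspose * N + (N * D).conjTranspose * (N * D) := by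
    have h2 : (N * D).conjTranspose * (N * D) = D * (N.conjTranspose * N) * D := by
      rw [Matrix.conjTranspose_mul, hDstar]
      noncomm_ring
    rw [h2]
    refine Matrix.ext fun i j => ?_
    simp only [Matrix.map_apply, hS, Matrix.add_apply]
    congr 1
    rw [hD, Matrix.mul_diagonal, Matrix.diagonal_mul, mul_assoc]
  have hpsd : (ee n ((N.conjTranspose * N).map φ)).PosSemidef := by
    rw [key, map_add, map_mul, map_mul, ee_star, ee_star]
    exact (Matrix.posSemidef_conjTranspose_mul_self _).add
      (Matrix.posSemidef_conjTranspose_mul_self _)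
  open scoped MatrixOrder in
  obtain ⟨B, hB⟩ := CStarAlgebra.nonneg_iff_eq_star_mul_self.mp hpsd.nonneg
  refine ⟨(ee n).symm B, ?_⟩
  have h3 : ee n ((N.conjTranspose * N).map φ)
      = ee n (((ee n).symm B).conjTranspose * (ee n).symm B) := by
    rw [map_mul, ee_star]
    simp [hB, Matrix.star_eq_conjTranspose]
  exact (ee n).injective h3

abbrev H2 := EuclideanSpace ℂ (Fin 2)
def hp : H2 := (WithLp.equiv 2 _).symm ![1,1]
def hm : H2 := (WithLp.equiv 2 _).symm ![1,-1]

lemma matCLM_mulVec (Y : M2) (v : Fin 2 → ℂ) :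
    (matCLM 2) Y ((WithLp.equiv 2 _).symm v) = (WithLp.equiv 2 _).symm (Y.mulVec v) := by
  rw [show ((matCLM 2) Y : H2 →L[ℂ] H2) = Matrix.toEuclideanCLM (𝕜 := ℂ) Y from rfl]
  rfl

lemma inner_symm_symm (v w : Fin 2 → ℂ) :
    (inner ℂ ((WithLp.equiv 2 (Fin 2 → ℂ)).symm v) ((WithLp.equiv 2 (Fin 2 → ℂ)).symm w) : ℂ)
      = star (v 0) * w 0 + star (v 1) * w 1 := by
  simp [PiLp.inner_apply, Fin.sum_univ_two, WithLp.equiv, Equiv.refl_apply]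
  ring

open ContinuousLinearMap in
lemma part2 (φ : M2 →ₗ[ℂ] M2)
    (hφ : ∀ X : M2, φ X = Matrix.of ![![X 0 0 + X 1 1, X 0 1 + X 1 0],
                        ![X 0 1 + X 1 0, X 0 0 + X 1 1]])
    (K : Type) [NormedAddCommGroup K] [InnerProductSpace ℂ K] [CompleteSpace K]
    (π : M2 →⋆ₐ[ℂ] (K →L[ℂ] K)) (V : H2 →L[ℂ] K)
    (hrep : ∀ X : M2, ((matCLM 2).comp φ) X = (adjoint V).comp ((π X).comp V))
    (hcyc : ∀ h : H2, V h ≠ 0 →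
      (Submodule.span ℂ {k : K | ∃ X : M2, k = π X (V h)}).topologicalClosure = ⊤) :
    False := by
  have inner_formula : ∀ (X : M2) (g h' : H2),
      (inner ℂ (π X (V g)) (V h') : ℂ) = inner ℂ g ((matCLM 2) (φ (star X)) h') := by
    intro X g h'
    have hX : π X = adjoint (π (star X)) := by
      rw [← ContinuousLinearMap.star_eq_adjoint, ← map_star, star_star]
    rw [hX, ContinuousLinearMap.adjoint_inner_left]
    have h3 := hrep (star X)
    have h4 : (matCLM 2) (φ (star X)) h' = (adjoint V) ((π (star X)) (V h')) := by
      rw [LinearMap.comp_apply] at h3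
      rw [h3]; rfl
    rw [h4, ContinuousLinearMap.adjoint_inner_right]
  have hc1 : ∀ Y : M2, (inner ℂ hp ((matCLM 2) (φ Y) hm) : ℂ) = 0 := by
    intro Y
    rw [hm, matCLM_mulVec, hp, inner_symm_symm, hφ]
    simp [Matrix.mulVec, dotProduct, Fin.sum_univ_two, Matrix.vecHead, Matrix.vecTail]
    ring
  have hVV : ∀ v w : Fin 2 → ℂ,
      (inner ℂ (V ((WithLp.equiv 2 (Fin 2 → ℂ)).symm v)) (V ((WithLp.equiv 2 (Fin 2 → ℂ)).symm w)) : ℂ)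
        = star (v 0) * ((φ 1).mulVec w 0) + star (v 1) * ((φ 1).mulVec w 1) := by
    intro v w
    have h := inner_formula 1 ((WithLp.equiv 2 (Fin 2 → ℂ)).symm v) ((WithLp.equiv 2 (Fin 2 → ℂ)).symm w)
    rw [star_one, map_one] at h
    simp only [ContinuousLinearMap.one_apply] at h
    rw [h, matCLM_mulVec, inner_symm_symm]
  have hone1 : φ 1 = Matrix.of ![![2,0],![0,2]] := by
    rw [hφ]
    ext i j
    fin_cases i <;> fin_cases j <;> simp [Matrix.one_apply] <;> norm_num
  have hone : ∀ w : Fin 2 → ℂ, (φ 1).mulVec w = fun i => 2 * w i := by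
    intro w
    funext i
    rw [hone1]
    fin_cases i <;>
      simp [Matrix.mulVec, dotProduct, Fin.sum_univ_two, Fin.mk_zero, Fin.mk_one,
        Matrix.vecHead, Matrix.vecTail]
  have hVhp : V hp ≠ 0 := by
    intro h0
    have h := hVV ![1,1] ![1,1]
    rw [show ((WithLp.equiv 2 (Fin 2 → ℂ)).symm ![1,1]) = hp from rfl, h0, inner_zero_right,
      hone] at h
    norm_num at h
  have hVhm : V hm ≠ 0 := by
    intro h0
    have h := hVV ![1,-1] ![1,-1]
    rw [show ((WithLp.equiv 2 (Fin 2 → ℂ)).symm ![1,-1]) = hm from rfl, h0, inner_zero_right,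
      hone] at h
    norm_num at h
  have horth : V hm ∈ (Submodule.span ℂ {k : K | ∃ X : M2, k = π X (V hp)})ᗮ := by
    rw [Submodule.mem_orthogonal]
    intro u hu
    induction hu using Submodule.span_induction with
    | mem x hx =>
        obtain ⟨X, rfl⟩ := hx
        rw [inner_formula]
        exact hc1 (star X)
    | zero => simp
    | add x y _ _ hx hy => rw [inner_add_left, hx, hy]; ring
    | smul c x _ hx => rw [inner_smul_left, hx]; ring
  have htop := hcyc hp hVhp
  rw [Submodule.topologicalClosure_eq_top_iff] at htop
  rw [htop] at horth
  exact hVhm (by simpa using horth)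

lemma pos_of_cp (ψ : M2 →ₗ[ℂ] M2) (hψ : IsCPMap ψ) (x : M2) :
    (ψ (x.conjTranspose * x)).PosSemidef := by
  obtain ⟨P, hP⟩ := hψ 1 (Matrix.of fun _ _ => x.conjTranspose * x)
    ⟨Matrix.of fun _ _ => x, by
      refine Matrix.ext fun i j => ?_
      simp [Matrix.of_apply, Matrix.mul_apply, Matrix.conjTranspose_apply, Matrix.star_eq_conjTranspose]⟩
  have h := congrFun (congrFun hP 0) 0
  simp only [Matrix.map_apply, Matrix.of_apply, Matrix.mul_apply, Fin.sum_univ_one,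
    Matrix.conjTranspose_apply] at h
  rw [h, Matrix.star_eq_conjTranspose]
  exact Matrix.posSemidef_conjTranspose_mul_self _

lemma lin_zero (α β : ℂ) (h : ∀ s : ℝ, 0 ≤ α * s + β) : α = 0 := by
  have him : ∀ s : ℝ, α.im * s + β.im = 0 := by
    intro s
    have := (Complex.le_def.mp (h s)).2
    simpa [Complex.add_im, Complex.mul_im] using this.symm
  have haim : α.im = 0 := by
    have h1 := him 1
    have h0 := him 0
    simp at h0
    rw [h0] at h1
    linarith
  have hre : ∀ s : ℝ, 0 ≤ α.re * s + β.re := by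
    intro s
    have := (Complex.le_def.mp (h s)).1
    simpa [Complex.add_re, Complex.mul_re] using this
  have hare : α.re = 0 := by
    by_contra hne
    have := hre (-(β.re + 1) / α.re)
    rw [mul_div_assoc'] at this
    rw [mul_comm, mul_div_assoc, div_self hne, mul_one] at this
    linarith
  exact Complex.ext hare haim

def E₀₀ : M2 := !![1,0;0,0]
def E₀₁ : M2 := !![0,1;0,0]
def E₁₀ : M2 := !![0,0;1,0]
def E₁₁ : M2 := !![0,0;0,1]

lemma quad_pm {M : M2} (hM : M.PosSemidef) : 0 ≤ M 0 0 - M 0 1 - M 1 0 + M 1 1 := by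
  have h := hM.dotProduct_mulVec_nonneg (![1,-1] : Fin 2 → ℂ)
  simp [dotProduct, Matrix.mulVec, Fin.sum_univ_two, sub_eq_add_neg,
    Matrix.vecHead, Matrix.vecTail] at h
  convert h using 1
  ring

lemma quad_pp {M : M2} (hM : M.PosSemidef) : 0 ≤ M 0 0 + M 0 1 + M 1 0 + M 1 1 := by
  have h := hM.dotProduct_mulVec_nonneg (![1,1] : Fin 2 → ℂ)
  simpa [dotProduct, Matrix.mulVec, Fin.sum_univ_two, add_assoc,
    Matrix.vecHead, Matrix.vecTail] using h

lemma herm01 {M : M2} (hM : M.PosSemidef) : M 0 1 = star (M 1 0) := by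
  have h0 := hM.1
  have h := congrFun (congrFun h0 0) 1
  rw [Matrix.conjTranspose_apply] at h
  exact h.symm

lemma part3 (φ ψ : M2 →ₗ[ℂ] M2)
    (hφ : ∀ X : M2, φ X = Matrix.of ![![X 0 0 + X 1 1, X 0 1 + X 1 0],
                        ![X 0 1 + X 1 0, X 0 0 + X 1 1]])
    (hψ : IsCPMap ψ)
    (hcol : ∀ X, φ X * (Matrix.of ![![(1:ℂ), 0], ![0, 0]]) = ψ X * (Matrix.of ![![1, 0], ![0, 0]]))
    (h1 : ψ 1 = φ 1) : ψ = φ := by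
  -- column-0 agreement
  have hc : ∀ (X : M2) (i : Fin 2), ψ X i 0 = φ X i 0 := by
    intro X i
    have h := congrFun (congrFun (hcol X) i) 0
    simpa [Matrix.mul_apply, Fin.sum_univ_two] using h.symm
  -- φ on the basis
  have hφ00 : φ E₀₀ = !![1,0;0,1] := by
    rw [hφ]; ext i j; fin_cases i <;> fin_cases j <;> simp [E₀₀]
  have hφ01 : φ E₀₁ = !![0,1;1,0] := by
    rw [hφ]; ext i j; fin_cases i <;> fin_cases j <;> simp [E₀₁]
  have hφ10 : φ E₁₀ = !![0,1;1,0] := by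
    rw [hφ]; ext i j; fin_cases i <;> fin_cases j <;> simp [E₁₀]
  have hφ11 : φ E₁₁ = !![1,0;0,1] := by
    rw [hφ]; ext i j; fin_cases i <;> fin_cases j <;> simp [E₁₁]
  -- column-0 entries of ψ on the basis
  have hA00 : ψ E₀₀ 0 0 = 1 := by rw [hc, hφ00]; norm_num
  have hA10 : ψ E₀₀ 1 0 = 0 := by rw [hc, hφ00]; norm_num
  have hB00 : ψ E₀₁ 0 0 = 0 := by rw [hc, hφ01]; norm_num
  have hB10 : ψ E₀₁ 1 0 = 1 := by rw [hc, hφ01]; norm_num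
  have hC00 : ψ E₁₀ 0 0 = 0 := by rw [hc, hφ10]; norm_num
  have hC10 : ψ E₁₀ 1 0 = 1 := by rw [hc, hφ10]; norm_num
  have hD00 : ψ E₁₁ 0 0 = 1 := by rw [hc, hφ11]; norm_num
  have hD10 : ψ E₁₁ 1 0 = 0 := by rw [hc, hφ11]; norm_num
  -- step 1
  have hz1 : E₀₀.conjTranspose * E₀₀ = E₀₀ := by
    ext i j
    fin_cases i <;> fin_cases j <;>
      simp [E₀₀, Matrix.mul_apply, Fin.sum_univ_two]
  have pos1 : (ψ E₀₀).PosSemidef := by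
    have h := pos_of_cp ψ hψ E₀₀; rwa [hz1] at h
  have hA01 : ψ E₀₀ 0 1 = 0 := by rw [herm01 pos1, hA10, star_zero]
  -- ψ E₁₁ off-column entries from h1
  have h1dec : (1 : M2) = E₀₀ + E₁₁ := by
    ext i j
    fin_cases i <;> fin_cases j <;> simp [E₀₀, E₁₁, Matrix.one_apply]
  have hφ1 : φ 1 = !![2,0;0,2] := by
    rw [hφ]
    ext i j
    fin_cases i <;> fin_cases j <;> simp [Matrix.one_apply] <;> norm_num
  have hsum : ψ E₀₀ + ψ E₁₁ = !![2,0;0,2] := by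
    rw [← map_add, ← h1dec, h1, hφ1]
  have hD01 : ψ E₁₁ 0 1 = 0 := by
    have h := congrFun (congrFun hsum 0) 1
    simp only [Matrix.add_apply] at h
    rw [hA01] at h
    simpa using h
  have hD11 : ψ E₁₁ 1 1 = 2 - ψ E₀₀ 1 1 := by
    have h := congrFun (congrFun hsum 1) 1
    simp only [Matrix.add_apply] at h
    rw [show (!![(2:ℂ),0;0,2]) 1 1 = 2 by norm_num] at h
    linear_combination h
  -- step 2 : x2 = [[1,1],[0,0]]
  have hz2 : (!![(1:ℂ),1;0,0]).conjTranspose * !![(1:ℂ),1;0,0] = E₀₀ + E₀₁ + E₁₀ + E₁₁ := by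
    ext i j
    fin_cases i <;> fin_cases j <;>
      simp [E₀₀, E₀₁, E₁₀, E₁₁, Matrix.mul_apply, Fin.sum_univ_two]
  have pos2 : (ψ E₀₀ + ψ E₀₁ + ψ E₁₀ + ψ E₁₁).PosSemidef := by
    have h := pos_of_cp ψ hψ !![(1:ℂ),1;0,0]
    rwa [hz2, map_add, map_add, map_add] at h
  have hbc : ψ E₀₁ 0 1 + ψ E₁₀ 0 1 = 2 := by
    have h := herm01 pos2
    simp only [Matrix.add_apply] at h
    rw [hA01, hA10, hB10, hC10, hD01, hD10] at h
    simp only [zero_add, add_zero] at h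
    rw [h]
    norm_num
  -- step 3 : x3 = [[1,I],[0,0]]
  have hz3 : (!![(1:ℂ),Complex.I;0,0]).conjTranspose * !![(1:ℂ),Complex.I;0,0]
      = E₀₀ + Complex.I • E₀₁ + (-Complex.I) • E₁₀ + E₁₁ := by
    ext i j
    fin_cases i <;> fin_cases j <;>
      simp [E₀₀, E₀₁, E₁₀, E₁₁, Matrix.mul_apply, Fin.sum_univ_two]
  have pos3 : (ψ E₀₀ + Complex.I • ψ E₀₁ + (-Complex.I) • ψ E₁₀ + ψ E₁₁).PosSemidef := by
    have h := pos_of_cp ψ hψ !![(1:ℂ),Complex.I;0,0]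
    rwa [hz3, map_add, map_add, map_add, map_smul, map_smul] at h
  have hbceq : ψ E₀₁ 0 1 = ψ E₁₀ 0 1 := by
    have h := herm01 pos3
    simp only [Matrix.add_apply, Matrix.smul_apply, smul_eq_mul] at h
    rw [hA01, hA10, hB10, hC10, hD01, hD10] at h
    simp only [mul_zero, mul_one, add_zero, zero_add] at h
    rw [show Complex.I + -Complex.I = (0:ℂ) by ring, star_zero] at h
    have h' : Complex.I * (ψ E₀₁ 0 1 - ψ E₁₀ 0 1) = 0 := by linear_combination h
    rcases mul_eq_zero.mp h' with h3 | h3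
    · exact absurd h3 Complex.I_ne_zero
    · linear_combination h3
  have hB01 : ψ E₀₁ 0 1 = 1 := by
    have := hbc; rw [← hbceq] at this; linear_combination this / 2
  have hC01 : ψ E₁₀ 0 1 = 1 := by rw [← hbceq]; exact hB01
  -- step 2b and 4 : u + r = 0
  have hur1 : (0:ℂ) ≤ ψ E₀₁ 1 1 + ψ E₁₀ 1 1 := by
    have h := quad_pm pos2
    have heq : (ψ E₀₀ + ψ E₀₁ + ψ E₁₀ + ψ E₁₁) 0 0 - (ψ E₀₀ + ψ E₀₁ + ψ E₁₀ + ψ E₁₁) 0 1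
        - (ψ E₀₀ + ψ E₀₁ + ψ E₁₀ + ψ E₁₁) 1 0 + (ψ E₀₀ + ψ E₀₁ + ψ E₁₀ + ψ E₁₁) 1 1
        = ψ E₀₁ 1 1 + ψ E₁₀ 1 1 := by
      simp only [Matrix.add_apply]
      rw [hA00, hA01, hA10, hB00, hB01, hB10, hC00, hC01, hC10, hD00, hD01, hD10, hD11]
      ring
    rwa [heq] at h
  have hz4 : (!![(1:ℂ),-1;0,0]).conjTranspose * !![(1:ℂ),-1;0,0]
      = E₀₀ + (-1:ℂ) • E₀₁ + (-1:ℂ) • E₁₀ + E₁₁ := by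
    ext i j
    fin_cases i <;> fin_cases j <;>
      simp [E₀₀, E₀₁, E₁₀, E₁₁, Matrix.mul_apply, Fin.sum_univ_two]
  have pos4 : (ψ E₀₀ + (-1:ℂ) • ψ E₀₁ + (-1:ℂ) • ψ E₁₀ + ψ E₁₁).PosSemidef := by
    have h := pos_of_cp ψ hψ !![(1:ℂ),-1;0,0]
    rwa [hz4, map_add, map_add, map_add, map_smul, map_smul] at h
  have hur2 : (0:ℂ) ≤ -(ψ E₀₁ 1 1 + ψ E₁₀ 1 1) := by
    have h := quad_pp pos4
    have heq : (ψ E₀₀ + (-1:ℂ) • ψ E₀₁ + (-1:ℂ) • ψ E₁₀ + ψ E₁₁) 0 0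
        + (ψ E₀₀ + (-1:ℂ) • ψ E₀₁ + (-1:ℂ) • ψ E₁₀ + ψ E₁₁) 0 1
        + (ψ E₀₀ + (-1:ℂ) • ψ E₀₁ + (-1:ℂ) • ψ E₁₀ + ψ E₁₁) 1 0
        + (ψ E₀₀ + (-1:ℂ) • ψ E₀₁ + (-1:ℂ) • ψ E₁₀ + ψ E₁₁) 1 1
        = -(ψ E₀₁ 1 1 + ψ E₁₀ 1 1) := by
      simp only [Matrix.add_apply, Matrix.smul_apply, smul_eq_mul]
      rw [hA00, hA01, hA10, hB00, hB01, hB10, hC00, hC01, hC10, hD00, hD01, hD10, hD11]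
      ring
    rwa [heq] at h
  have hur : ψ E₀₁ 1 1 + ψ E₁₀ 1 1 = 0 :=
    le_antisymm (by simpa using neg_nonneg.mp hur2) hur1
  -- step 5 : t = 1
  have hz5 : ∀ s : ℝ, (!![(s:ℂ)+1,(s:ℂ);0,0]).conjTranspose * !![(s:ℂ)+1,(s:ℂ);0,0]
      = (((s:ℂ)+1)*((s:ℂ)+1)) • E₀₀ + (((s:ℂ)+1)*(s:ℂ)) • E₀₁
        + ((s:ℂ)*((s:ℂ)+1)) • E₁₀ + ((s:ℂ)*(s:ℂ)) • E₁₁ := by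
    intro s
    ext i j
    fin_cases i <;> fin_cases j <;>
      simp [E₀₀, E₀₁, E₁₀, E₁₁, Matrix.mul_apply, Fin.sum_univ_two, Complex.conj_ofReal] <;>
      ring
  have hlin5 : ∀ s : ℝ, (0:ℂ) ≤ (2 * ψ E₀₀ 1 1 - 2) * s + (1 + ψ E₀₀ 1 1) := by
    intro s
    have pos5 : ((((s:ℂ)+1)*((s:ℂ)+1)) • ψ E₀₀ + (((s:ℂ)+1)*(s:ℂ)) • ψ E₀₁
        + ((s:ℂ)*((s:ℂ)+1)) • ψ E₁₀ + ((s:ℂ)*(s:ℂ)) • ψ E₁₁).PosSemidef := by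
      have h := pos_of_cp ψ hψ !![(s:ℂ)+1,(s:ℂ);0,0]
      rwa [hz5, map_add, map_add, map_add, map_smul, map_smul, map_smul, map_smul] at h
    have h := quad_pm pos5
    have heq : ((((s:ℂ)+1)*((s:ℂ)+1)) • ψ E₀₀ + (((s:ℂ)+1)*(s:ℂ)) • ψ E₀₁
        + ((s:ℂ)*((s:ℂ)+1)) • ψ E₁₀ + ((s:ℂ)*(s:ℂ)) • ψ E₁₁) 0 0
        - ((((s:ℂ)+1)*((s:ℂ)+1)) • ψ E₀₀ + (((s:ℂ)+1)*(s:ℂ)) • ψ E₀₁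
        + ((s:ℂ)*((s:ℂ)+1)) • ψ E₁₀ + ((s:ℂ)*(s:ℂ)) • ψ E₁₁) 0 1
        - ((((s:ℂ)+1)*((s:ℂ)+1)) • ψ E₀₀ + (((s:ℂ)+1)*(s:ℂ)) • ψ E₀₁
        + ((s:ℂ)*((s:ℂ)+1)) • ψ E₁₀ + ((s:ℂ)*(s:ℂ)) • ψ E₁₁) 1 0
        + ((((s:ℂ)+1)*((s:ℂ)+1)) • ψ E₀₀ + (((s:ℂ)+1)*(s:ℂ)) • ψ E₀₁
        + ((s:ℂ)*((s:ℂ)+1)) • ψ E₁₀ + ((s:ℂ)*(s:ℂ)) • ψ E₁₁) 1 1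
        = (2 * ψ E₀₀ 1 1 - 2) * s + (1 + ψ E₀₀ 1 1) := by
      simp only [Matrix.add_apply, Matrix.smul_apply, smul_eq_mul]
      rw [hA00, hA01, hA10, hB00, hB01, hB10, hC00, hC01, hC10, hD00, hD01, hD10, hD11]
      linear_combination ((s:ℂ)*((s:ℂ)+1)) * hur
    rwa [heq] at h
  have ht : ψ E₀₀ 1 1 = 1 := by
    have h := lin_zero _ _ hlin5
    linear_combination h / 2
  -- step 6 : u = 0
  have hz6 : ∀ s : ℝ, (!![1+Complex.I*(s:ℂ),Complex.I*(s:ℂ);0,0]).conjTranspose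
        * !![1+Complex.I*(s:ℂ),Complex.I*(s:ℂ);0,0]
      = ((1-Complex.I*(s:ℂ))*(1+Complex.I*(s:ℂ))) • E₀₀
        + ((1-Complex.I*(s:ℂ))*(Complex.I*(s:ℂ))) • E₀₁
        + ((-(Complex.I*(s:ℂ)))*(1+Complex.I*(s:ℂ))) • E₁₀
        + ((-(Complex.I*(s:ℂ)))*(Complex.I*(s:ℂ))) • E₁₁ := by
    intro s
    ext i j
    fin_cases i <;> fin_cases j <;>
      simp only [E₀₀, E₀₁, E₁₀, E₁₁, Matrix.mul_apply, Matrix.conjTranspose_apply,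
        Fin.sum_univ_two, Matrix.add_apply, Matrix.smul_apply, smul_eq_mul, Matrix.cons_val',
        Matrix.cons_val_zero, Matrix.cons_val_one, Matrix.head_cons, Matrix.head_fin_const,
        Matrix.empty_val', Matrix.cons_val_fin_one, Matrix.of_apply, star_add, star_one,
        star_zero, star_mul', Complex.star_def, Complex.conj_I, Complex.conj_ofReal,
        Fin.zero_eta, Fin.mk_one, map_mul, map_one, map_add] <;>
      ring
  have hlin6 : ∀ s : ℝ, (0:ℂ) ≤ (2*Complex.I*ψ E₀₁ 1 1) * s + 2 := by
    intro s
    have pos6 : (((1-Complex.I*(s:ℂ))*(1+Complex.I*(s:ℂ))) • ψ E₀₀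
        + ((1-Complex.I*(s:ℂ))*(Complex.I*(s:ℂ))) • ψ E₀₁
        + ((-(Complex.I*(s:ℂ)))*(1+Complex.I*(s:ℂ))) • ψ E₁₀
        + ((-(Complex.I*(s:ℂ)))*(Complex.I*(s:ℂ))) • ψ E₁₁).PosSemidef := by
      have h := pos_of_cp ψ hψ !![1+Complex.I*(s:ℂ),Complex.I*(s:ℂ);0,0]
      rwa [hz6, map_add, map_add, map_add, map_smul, map_smul, map_smul, map_smul] at h
    have h := quad_pm pos6
    have heq : (((1-Complex.I*(s:ℂ))*(1+Complex.I*(s:ℂ))) • ψ E₀₀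
        + ((1-Complex.I*(s:ℂ))*(Complex.I*(s:ℂ))) • ψ E₀₁
        + ((-(Complex.I*(s:ℂ)))*(1+Complex.I*(s:ℂ))) • ψ E₁₀
        + ((-(Complex.I*(s:ℂ)))*(Complex.I*(s:ℂ))) • ψ E₁₁) 0 0
        - (((1-Complex.I*(s:ℂ))*(1+Complex.I*(s:ℂ))) • ψ E₀₀
        + ((1-Complex.I*(s:ℂ))*(Complex.I*(s:ℂ))) • ψ E₀₁
        + ((-(Complex.I*(s:ℂ)))*(1+Complex.I*(s:ℂ))) • ψ E₁₀
        + ((-(Complex.I*(s:ℂ)))*(Complex.I*(s:ℂ))) • ψ E₁₁) 0 1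
        - (((1-Complex.I*(s:ℂ))*(1+Complex.I*(s:ℂ))) • ψ E₀₀
        + ((1-Complex.I*(s:ℂ))*(Complex.I*(s:ℂ))) • ψ E₀₁
        + ((-(Complex.I*(s:ℂ)))*(1+Complex.I*(s:ℂ))) • ψ E₁₀
        + ((-(Complex.I*(s:ℂ)))*(Complex.I*(s:ℂ))) • ψ E₁₁) 1 0
        + (((1-Complex.I*(s:ℂ))*(1+Complex.I*(s:ℂ))) • ψ E₀₀
        + ((1-Complex.I*(s:ℂ))*(Complex.I*(s:ℂ))) • ψ E₀₁
        + ((-(Complex.I*(s:ℂ)))*(1+Complex.I*(s:ℂ))) • ψ E₁₀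
        + ((-(Complex.I*(s:ℂ)))*(Complex.I*(s:ℂ))) • ψ E₁₁) 1 1
        = (2*Complex.I*ψ E₀₁ 1 1) * s + 2 := by
      simp only [Matrix.add_apply, Matrix.smul_apply, smul_eq_mul]
      rw [hA00, hA01, hA10, hB00, hB01, hB10, hC00, hC01, hC10, hD00, hD01, hD10, hD11, ht]
      linear_combination (-(Complex.I*(s:ℂ)) - Complex.I^2*(s:ℂ)^2) * hur
    rwa [heq] at h
  have hu : ψ E₀₁ 1 1 = 0 := by
    have h := lin_zero _ _ hlin6
    have h2 : Complex.I * ψ E₀₁ 1 1 = 0 := by linear_combination h / 2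
    rcases mul_eq_zero.mp h2 with h3 | h3
    · exact absurd h3 Complex.I_ne_zero
    · exact h3
  have hr : ψ E₁₀ 1 1 = 0 := by linear_combination hur - hu
  have hD11' : ψ E₁₁ 1 1 = 1 := by rw [hD11, ht]; norm_num
  -- ψ on the basis
  have hψ00 : ψ E₀₀ = !![1,0;0,1] := by
    refine Matrix.ext fun i j => ?_
    fin_cases i <;> fin_cases j
    · simpa using hA00
    · simpa using hA01
    · simpa using hA10
    · simpa using ht
  have hψ01 : ψ E₀₁ = !![0,1;1,0] := by
    refine Matrix.ext fun i j => ?_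
    fin_cases i <;> fin_cases j
    · simpa using hB00
    · simpa using hB01
    · simpa using hB10
    · simpa using hu
  have hψ10 : ψ E₁₀ = !![0,1;1,0] := by
    refine Matrix.ext fun i j => ?_
    fin_cases i <;> fin_cases j
    · simpa using hC00
    · simpa using hC01
    · simpa using hC10
    · simpa using hr
  have hψ11 : ψ E₁₁ = !![1,0;0,1] := by
    refine Matrix.ext fun i j => ?_
    fin_cases i <;> fin_cases j
    · simpa using hD00
    · simpa using hD01
    · simpa using hD10
    · simpa using hD11'
  -- assemble
  have hdec : ∀ X : M2, X = X 0 0 • E₀₀ + X 0 1 • E₀₁ + X 1 0 • E₁₀ + X 1 1 • E₁₁ := by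
    intro X
    ext i j
    fin_cases i <;> fin_cases j <;>
      simp [E₀₀, E₀₁, E₁₀, E₁₁]
  refine LinearMap.ext fun X => ?_
  have hstep : ψ X = X 0 0 • ψ E₀₀ + X 0 1 • ψ E₀₁ + X 1 0 • ψ E₁₀ + X 1 1 • ψ E₁₁ := by
    conv_lhs => rw [hdec X]
    simp [map_add, map_smul]
  rw [hstep, hψ00, hψ01, hψ10, hψ11, hφ]
  ext i j
  fin_cases i <;> fin_cases j <;>
    simp <;> ring


end NotQuasiPureAux

/-- **Example.** The map `φ : M₂(ℂ) → M₂(ℂ)`,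
`φ([[a,b],[c,d]]) = [[a+d, b+c],[b+c, a+d]]`, is completely positive but not quasi-pure;
nevertheless, with `R = [[1,0],[0,0]]`, every completely positive `ψ` with
`φ(X)R = ψ(X)R` for all `X` and `ψ(1) = φ(1)` equals `φ`. -/
theorem not_quasiPure_but_rigid
    (φ : Matrix (Fin 2) (Fin 2) ℂ →ₗ[ℂ] Matrix (Fin 2) (Fin 2) ℂ)
    (hφ : ∀ X : Matrix (Fin 2) (Fin 2) ℂ,
      φ X = Matrix.of ![![X 0 0 + X 1 1, X 0 1 + X 1 0],
                        ![X 0 1 + X 1 0, X 0 0 + X 1 1]])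
    (R : Matrix (Fin 2) (Fin 2) ℂ) (hR : R = Matrix.of ![![1, 0], ![0, 0]]) :
    IsCPMap φ ∧ ¬ IsQuasiPureMat φ ∧
      ∀ ψ : Matrix (Fin 2) (Fin 2) ℂ →ₗ[ℂ] Matrix (Fin 2) (Fin 2) ℂ,
        IsCPMap ψ → (∀ X, φ X * R = ψ X * R) → ψ 1 = φ 1 → ψ = φ := by
  subst hR
  have hS : ∀ X : NotQuasiPureAux.M2, φ X = X + NotQuasiPureAux.S * X * NotQuasiPureAux.S := by
    intro X
    rw [hφ]
    ext i j
    fin_cases i <;> fin_cases j <;>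
      simp [NotQuasiPureAux.S, Matrix.mul_apply, Fin.sum_univ_two, Matrix.vecMul,
        dotProduct, Matrix.vecHead, Matrix.vecTail] <;> ring
  refine ⟨NotQuasiPureAux.part1 φ hS, ?_, fun ψ hψ hcol h1 => NotQuasiPureAux.part3 φ ψ hφ hψ hcol h1⟩
  rintro ⟨K, π, V, hrep, -, hcyc⟩
  exact NotQuasiPureAux.part2 φ hφ K.carrier π V hrep hcyc
end
end
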